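/- arXiv:1907.08914 — 8 statements merged into one kernel-verified Lean document; each statement's English description precedes it below -/
import Mathlib

section
/- Let Γ be a connected undirected graph and assume agents' preferences are single-peaked under Γ. For any false-name-proof social choice function f, any profile θ, and any vertex v occupied in θ: if f(θ) is an occupied vertex of θ and f(θ) remains occupied after removing all agents located at v, then f applied to the profile with all agents at v removed still outputs f(θ). -/
namespace FNPFL

variable {V : Type*}

/-- Single-peaked Pareto domination: `v` dominates `w` under profile `θ`
(agents prefer smaller distance). -/
def Dom (d : V → V → ℕ) (θ : Multiset V) (v w : V) : Prop :=
  (∀ i ∈ θ, d i v ≤ d i w) ∧ ∃ i ∈ θ, d i v < d i w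

/-- `w` is Pareto efficient under `θ` (single-peaked). -/
def IsPE (d : V → V → ℕ) (θ : Multiset V) (w : V) : Prop :=
  ∀ v, ¬ Dom d θ v w

/-- A social choice function is Pareto efficient (single-peaked). -/
def ParetoEfficient (d : V → V → ℕ) (f : Multiset V → V) : Prop :=
  ∀ θ : Multiset V, θ ≠ 0 → IsPE d θ (f θ)

/-- False-name-proofness (single-peaked): an agent `i ∈ θ` replaces her report by
any nonempty multiset `fake` of reports (a misreport plus possibly extra fake
identities) and cannot obtain an outcome strictly closer to her true location. -/
def FalseNameProof [DecidableEq V] (d : V → V → ℕ) (f : Multiset V → V) : Prop :=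
  ∀ θ : Multiset V, ∀ i ∈ θ, ∀ fake : Multiset V, fake ≠ 0 →
    d i (f θ) ≤ d i (f (θ.erase i + fake))

/-- Truthfulness (single-peaked): no agent benefits by a single misreport. -/
def Truthful [DecidableEq V] (d : V → V → ℕ) (f : Multiset V → V) : Prop :=
  ∀ θ : Multiset V, ∀ i ∈ θ, ∀ x : V,
    d i (f θ) ≤ d i (f (θ.erase i + {x}))

/-- `f` is the sequential Pareto rule with ordering `σ` (single-peaked):
on every nonempty profile it outputs the first Pareto efficient vertex in `σ`. -/
def SeqParetoRule (d : V → V → ℕ) (σ : List V) (f : Multiset V → V) : Prop :=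
  ∀ θ : Multiset V, θ ≠ 0 →
    ∃ l₁ l₂, σ = l₁ ++ f θ :: l₂ ∧ IsPE d θ (f θ) ∧ ∀ u ∈ l₁, ¬ IsPE d θ u

/-- Single-dipped Pareto domination: `v` dominates `w` under `θ`
(agents prefer larger distance). -/
def DomD (d : V → V → ℕ) (θ : Multiset V) (v w : V) : Prop :=
  (∀ i ∈ θ, d i w ≤ d i v) ∧ ∃ i ∈ θ, d i w < d i v

/-- `w` is Pareto efficient under `θ` (single-dipped). -/
def IsPED (d : V → V → ℕ) (θ : Multiset V) (w : V) : Prop :=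
  ∀ v, ¬ DomD d θ v w

/-- Pareto efficiency of an SCF (single-dipped). -/
def ParetoEfficientD (d : V → V → ℕ) (f : Multiset V → V) : Prop :=
  ∀ θ : Multiset V, θ ≠ 0 → IsPED d θ (f θ)

/-- False-name-proofness (single-dipped): no agent can obtain an outcome strictly
farther from her true location by misreporting and/or adding fake identities. -/
def FalseNameProofD [DecidableEq V] (d : V → V → ℕ) (f : Multiset V → V) : Prop :=
  ∀ θ : Multiset V, ∀ i ∈ θ, ∀ fake : Multiset V, fake ≠ 0 →
    d i (f (θ.erase i + fake)) ≤ d i (f θ)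

/-- Sequential Pareto rule with ordering `σ` (single-dipped). -/
def SeqParetoRuleD (d : V → V → ℕ) (σ : List V) (f : Multiset V → V) : Prop :=
  ∀ θ : Multiset V, θ ≠ 0 →
    ∃ l₁ l₂, σ = l₁ ++ f θ :: l₂ ∧ IsPED d θ (f θ) ∧ ∀ u ∈ l₁, ¬ IsPED d θ u

/-- Graph distance on the cycle `C_k` with vertices `ZMod k`. -/
def cycleDist (k : ℕ) (v w : ZMod k) : ℕ := min (v - w).val (w - v).val

/-- Manhattan (= graph) distance on a 2-dimensional grid. -/
def gridDist {l m : ℕ} (u v : Fin l × Fin m) : ℕ :=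
  Nat.dist u.1.val v.1.val + Nat.dist u.2.val v.2.val

end FNPFL

open FNPFL

/-- for single-peaked preferences on a connected graph, removing all
agents at an occupied vertex `v` does not change the outcome of a false-name-proof
SCF, provided the outcome was occupied and remains occupied. -/
theorem stmt1 {V : Type*} [DecidableEq V] (G : SimpleGraph V) (hG : G.Connected)
    (f : Multiset V → V) (hf : FalseNameProof G.dist f)
    (θ : Multiset V) (v : V) (hv : v ∈ θ)
    (h1 : f θ ∈ θ) (h2 : f θ ∈ θ.filter (· ≠ v)) :
    f (θ.filter (· ≠ v)) = f θ := by
  have key := hf (θ.filter (· ≠ v)) (f θ) h2 ({f θ} + θ.filter (fun x => ¬ x ≠ v))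
    (by simp [Multiset.singleton_add])
  have heq : (θ.filter (· ≠ v)).erase (f θ) + ({f θ} + θ.filter (fun x => ¬ x ≠ v)) = θ := by
    rw [← add_assoc]
    have h3 : (θ.filter (· ≠ v)).erase (f θ) + {f θ} = θ.filter (· ≠ v) := by
      rw [add_comm, Multiset.singleton_add, Multiset.cons_erase h2]
    rw [h3, Multiset.filter_add_not]
  rw [heq] at key
  rw [SimpleGraph.dist_self] at key
  have h0 : G.dist (f θ) (f (θ.filter (· ≠ v))) = 0 := Nat.le_zero.mp key
  exact ((SimpleGraph.Reachable.dist_eq_zero_iff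
    (hG.preconnected (f θ) (f (θ.filter (· ≠ v))))).mp h0).symm
end

section
/- For the cycle graph C_3 on three vertices with single-peaked preferences, every sequential Pareto rule is false-name-proof and Pareto efficient. -/
open FNPFL

/-!
On `C_3` every two distinct vertices are adjacent, so the distance is the discrete one. Then the
Pareto efficient vertices of a profile are exactly the reported ones, and a sequential Pareto rule
picks the first reported vertex in `σ`. An agent at `i` who does not get `i` could only gain by
making `i` the outcome; but `i` would then precede the truthful outcome `f θ` in `σ`, which is
still reported, whereas `f θ` precedes `i` because `i` was reported truthfully.
-/

theorem List.eq_of_find?_eq_some_of_find?_eq_some {α : Type*} {p q : α → Bool} {l : List α}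
    {a b : α} (ha : l.find? p = some a) (hb : l.find? q = some b) (hqa : q a) (hpb : p b) :
    a = b := by
  induction l with
  | nil => simp at ha
  | cons x l ih =>
    by_cases hpx : p x
    · rw [List.find?_cons_of_pos hpx, Option.some_inj] at ha
      subst ha
      rwa [List.find?_cons_of_pos hqa, Option.some_inj] at hb
    · by_cases hqx : q x
      · rw [List.find?_cons_of_pos hqx, Option.some_inj] at hb
        exact absurd (hb ▸ hpb) hpx
      · rw [List.find?_cons_of_neg hpx] at ha
        rw [List.find?_cons_of_neg hqx] at hb
        exact ih ha hb

namespace FNPFL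

variable {V : Type*}

theorem SeqParetoRule.paretoEfficient {d : V → V → ℕ} {σ : List V} {f : Multiset V → V}
    (hf : SeqParetoRule d σ f) : ParetoEfficient d f := fun θ hθ =>
  (hf θ hθ).choose_spec.choose_spec.2.1

variable [DecidableEq V]

def discreteDist (v w : V) : ℕ := if v = w then 0 else 1

theorem cycleDist_three : cycleDist 3 = discreteDist := by
  funext v w
  revert v w
  decide

theorem isPE_discreteDist_iff {θ : Multiset V} (hθ : θ ≠ 0) {w : V} :
    IsPE discreteDist θ w ↔ w ∈ θ := by
  constructor
  · intro hw
    by_contra hwθ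
    obtain ⟨v, hv⟩ := Multiset.exists_mem_of_ne_zero hθ
    refine hw v ⟨fun i hi => ?_, v, hv, ?_⟩
    · have hiw : i ≠ w := by rintro rfl; exact hwθ hi
      simp only [discreteDist, if_neg hiw]
      split <;> omega
    · have hvw : v ≠ w := by rintro rfl; exact hwθ hv
      simp [discreteDist, hvw]
  · rintro hwθ v ⟨hle, _, -, hlt⟩
    -- the agent at `w` only accepts `v = w`
    have hvw : v = w := by
      by_contra hvw
      simpa [discreteDist, Ne.symm hvw] using hle w hwθ
    subst hvw
    exact lt_irrefl _ hlt

theorem SeqParetoRule.find?_mem_eq {σ : List V} {f : Multiset V → V}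
    (hf : SeqParetoRule discreteDist σ f) {θ : Multiset V} (hθ : θ ≠ 0) :
    σ.find? (· ∈ θ) = some (f θ) := by
  obtain ⟨l₁, l₂, hσ, hpe, hfirst⟩ := hf θ hθ
  rw [List.find?_eq_some_iff_append]
  refine ⟨by simpa using (isPE_discreteDist_iff hθ).1 hpe, l₁, l₂, hσ, fun u hu => ?_⟩
  simpa [← isPE_discreteDist_iff hθ] using hfirst u hu

theorem SeqParetoRule.falseNameProof_discreteDist {σ : List V} {f : Multiset V → V}
    (hf : SeqParetoRule discreteDist σ f) : FalseNameProof discreteDist f := by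
  intro θ i hi fake hfake
  by_cases hfi : f θ = i
  · simp [discreteDist, hfi]
  have hθ : θ ≠ 0 := by rintro rfl; simp at hi
  have hθ' : θ.erase i + fake ≠ 0 := by simp [hfake]
  have hfθ' : f (θ.erase i + fake) ≠ i := by
    intro hfi'
    have hmem : f θ ∈ θ.erase i + fake :=
      Multiset.mem_add.2 <| .inl <| (Multiset.mem_erase_of_ne hfi).2 <|
        (isPE_discreteDist_iff hθ).1 (hf.paretoEfficient θ hθ)
    have hfirst' := hf.find?_mem_eq hθ'
    rw [hfi'] at hfirst'
    exact hfi (List.eq_of_find?_eq_some_of_find?_eq_some (hf.find?_mem_eq hθ) hfirst'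
      (decide_eq_true hmem) (decide_eq_true hi))
  simp [discreteDist, Ne.symm hfi, Ne.symm hfθ']

end FNPFL

theorem stmt2_general (σ : List (ZMod 3))
    (f : Multiset (ZMod 3) → ZMod 3) (hf : SeqParetoRule (cycleDist 3) σ f) :
    FalseNameProof (cycleDist 3) f ∧ ParetoEfficient (cycleDist 3) f := by
  rw [cycleDist_three] at hf ⊢
  exact ⟨hf.falseNameProof_discreteDist, hf.paretoEfficient⟩

/-- on the cycle `C_3` with single-peaked preferences, every
sequential Pareto rule is false-name-proof and Pareto efficient. -/
theorem stmt2 (σ : List (ZMod 3)) (hσnd : σ.Nodup) (hσall : ∀ v : ZMod 3, v ∈ σ)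
    (f : Multiset (ZMod 3) → ZMod 3) (hf : SeqParetoRule (cycleDist 3) σ f) :
    FalseNameProof (cycleDist 3) f ∧ ParetoEfficient (cycleDist 3) f :=
  stmt2_general σ f hf
end

section
/- For the cycle graph C_4 with vertices v1, v2, v3, v4 (in cyclic order) and single-peaked preferences, the sequential Pareto rule with checking order v1, v3, v2, v4 is a false-name-proof and Pareto efficient social choice function. -/
open FNPFL

namespace Stmt3Aux

/-- Boolean-membership version of single-peaked Pareto efficiency on `C_4`. -/
def peP (b : ZMod 4 → Bool) (w : ZMod 4) : Prop :=
  ∀ v : ZMod 4, ¬ ((∀ j, b j = true → cycleDist 4 j v ≤ cycleDist 4 j w) ∧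
    ∃ j, b j = true ∧ cycleDist 4 j v < cycleDist 4 j w)

instance (b : ZMod 4 → Bool) (w : ZMod 4) : Decidable (peP b w) := by
  unfold peP; infer_instance

/-- The first vertex in order `0,2,1,3` that is Pareto efficient. -/
def F (b : ZMod 4 → Bool) : ZMod 4 :=
  if peP b 0 then 0 else if peP b 2 then 2 else if peP b 1 then 1 else 3

lemma pe_iff (θ : Multiset (ZMod 4)) (w : ZMod 4) :
    IsPE (cycleDist 4) θ w ↔ peP (fun j => decide (j ∈ θ)) w := by
  unfold IsPE Dom peP
  simp

lemma fchar (f : Multiset (ZMod 4) → ZMod 4)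
    (hf : SeqParetoRule (cycleDist 4) [0, 2, 1, 3] f)
    (θ : Multiset (ZMod 4)) (hθ : θ ≠ 0) :
    f θ = F (fun j => decide (j ∈ θ)) := by
  obtain ⟨l₁, l₂, heq, hpe, hl₁⟩ := hf θ hθ
  rw [pe_iff] at hpe
  have hl₁' : ∀ u ∈ l₁, ¬ peP (fun j => decide (j ∈ θ)) u := by
    intro u hu
    rw [← pe_iff]; exact hl₁ u hu
  unfold F
  rcases l₁ with _ | ⟨a, _ | ⟨b, _ | ⟨c, _ | ⟨e, l⟩⟩⟩⟩
  · simp only [List.nil_append, List.cons.injEq] at heq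
    rw [if_pos (heq.1 ▸ hpe), heq.1]
  · simp only [List.cons_append, List.nil_append, List.cons.injEq] at heq
    have h0 := hl₁' a (by simp)
    rw [← heq.1] at h0
    rw [if_neg h0, if_pos (heq.2.1 ▸ hpe), ← heq.2.1]
  · simp only [List.cons_append, List.nil_append, List.cons.injEq] at heq
    have h0 := hl₁' a (by simp)
    have h2 := hl₁' b (by simp)
    rw [← heq.1] at h0; rw [← heq.2.1] at h2
    rw [if_neg h0, if_neg h2, if_pos (heq.2.2.1 ▸ hpe), ← heq.2.2.1]
  · simp only [List.cons_append, List.nil_append, List.cons.injEq] at heq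
    have h0 := hl₁' a (by simp)
    have h2 := hl₁' b (by simp)
    have h1 := hl₁' c (by simp)
    rw [← heq.1] at h0; rw [← heq.2.1] at h2; rw [← heq.2.2.1] at h1
    rw [if_neg h0, if_neg h2, if_neg h1, ← heq.2.2.2.1]
  · exfalso
    have := congrArg List.length heq
    simp at this

lemma key : ∀ (i : ZMod 4) (b t : ZMod 4 → Bool) (ci : Bool),
    b i = true → (∃ j, t j = true) →
    cycleDist 4 i (F b) ≤
      cycleDist 4 i (F (fun j => (decide (j ≠ i) && b j) || (decide (j = i) && ci) || t j)) := by
  decide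

end Stmt3Aux

/-- on `C_4` with single-peaked preferences, the sequential Pareto
rule with checking order `v1, v3, v2, v4` is false-name-proof and Pareto
efficient. (Vertices `v1,…,v4` are `0,…,3 : ZMod 4` in cyclic order.) -/
theorem stmt3 (f : Multiset (ZMod 4) → ZMod 4)
    (hf : SeqParetoRule (cycleDist 4) [0, 2, 1, 3] f) :
    FalseNameProof (cycleDist 4) f ∧ ParetoEfficient (cycleDist 4) f := by
  open Stmt3Aux in
  constructor
  · intro θ i hi fake hfake
    have hθ : θ ≠ 0 := fun h => by simp [h] at hi
    have hθ' : θ.erase i + fake ≠ 0 := by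
      intro h
      obtain ⟨x, hx⟩ := Multiset.exists_mem_of_ne_zero hfake
      have : x ∈ θ.erase i + fake := Multiset.mem_add.2 (Or.inr hx)
      simp [h] at this
    rw [fchar f hf θ hθ, fchar f hf _ hθ']
    have hb : (fun j => decide (j ∈ θ)) i = true := by simp [hi]
    obtain ⟨x, hx⟩ := Multiset.exists_mem_of_ne_zero hfake
    have ht : ∃ j, (fun j => decide (j ∈ fake)) j = true := ⟨x, by simp [hx]⟩
    have hfun : (fun j => decide (j ∈ θ.erase i + fake)) =
        (fun j => (decide (j ≠ i) && decide (j ∈ θ)) ||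
          (decide (j = i) && decide (i ∈ θ.erase i)) || decide (j ∈ fake)) := by
      funext j
      by_cases hji : j = i
      · subst hji; simp [Multiset.mem_add]
      · simp [Multiset.mem_add, hji, Multiset.mem_erase_of_ne hji]
    rw [hfun]
    exact key i _ _ _ hb ht
  · intro θ hθ
    exact (hf θ hθ).choose_spec.choose_spec.2.1
end

section
/- On the cycle C_5 with single-peaked preferences, the sequential Pareto rule with checking order v1, v2, v3, v4, v5 is not truthful (hence not false-name-proof): under the profile with one agent at each of v3, v4, v5, the rule outputs v3, but the agent at v5 strictly benefits by instead reporting v1, since the rule then outputs v1, which is at distance 1 from v5 instead of distance 2 (= min(2, 3) on the cycle). -/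
open FNPFL

lemma first_is_two (P : ZMod 5 → Prop) (x : ZMod 5) (l₁ l₂ : List (ZMod 5))
    (hσ : ([0, 1, 2, 3, 4] : List (ZMod 5)) = l₁ ++ x :: l₂) (hx : P x)
    (hpre : ∀ u ∈ l₁, ¬ P u) (h0 : ¬ P 0) (h1 : ¬ P 1) (h2 : P 2) : x = 2 := by
  rcases l₁ with _ | ⟨a, _ | ⟨b, _ | ⟨c, l⟩⟩⟩ <;>
    simp only [List.nil_append, List.cons_append, List.cons.injEq] at hσ
  · exact absurd (hσ.1 ▸ hx) h0
  · exact absurd (hσ.2.1 ▸ hx) h1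
  · exact hσ.2.2.1.symm
  · exact absurd (hσ.2.2.1 ▸ h2) (hpre c (by simp))

lemma first_is_zero (P : ZMod 5 → Prop) (x : ZMod 5) (l₁ l₂ : List (ZMod 5))
    (hσ : ([0, 1, 2, 3, 4] : List (ZMod 5)) = l₁ ++ x :: l₂)
    (hpre : ∀ u ∈ l₁, ¬ P u) (h0 : P 0) : x = 0 := by
  rcases l₁ with _ | ⟨a, l⟩ <;>
    simp only [List.nil_append, List.cons_append, List.cons.injEq] at hσ
  · exact hσ.1.symm
  · exact absurd (hσ.1 ▸ h0) (hpre a (by simp))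

/-- on `C_5` with single-peaked preferences, the sequential Pareto
rule with checking order `v1, v2, v3, v4, v5` is not truthful: on the profile
`{v3, v4, v5}` it outputs `v3`, but the agent at `v5` benefits by reporting `v1`
instead, which makes the output `v1`, at distance `1` from `v5` instead of `2`.
(Vertices `v1,…,v5` are `0,…,4 : ZMod 5`.) -/
theorem stmt5 (f : Multiset (ZMod 5) → ZMod 5)
    (hf : SeqParetoRule (cycleDist 5) [0, 1, 2, 3, 4] f) :
    f ({2, 3, 4} : Multiset (ZMod 5)) = 2 ∧
    f ({0, 2, 3} : Multiset (ZMod 5)) = 0 ∧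
    cycleDist 5 4 (f ({0, 2, 3} : Multiset (ZMod 5))) <
      cycleDist 5 4 (f ({2, 3, 4} : Multiset (ZMod 5))) ∧
    ¬ Truthful (cycleDist 5) f := by
  have hA : ¬ IsPE (cycleDist 5) ({2, 3, 4} : Multiset (ZMod 5)) 0 := by
    unfold IsPE Dom cycleDist; decide
  have hB : ¬ IsPE (cycleDist 5) ({2, 3, 4} : Multiset (ZMod 5)) 1 := by
    unfold IsPE Dom cycleDist; decide
  have hC : IsPE (cycleDist 5) ({2, 3, 4} : Multiset (ZMod 5)) 2 := by
    unfold IsPE Dom cycleDist; decide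
  have hD : IsPE (cycleDist 5) ({0, 2, 3} : Multiset (ZMod 5)) 0 := by
    unfold IsPE Dom cycleDist; decide
  obtain ⟨l₁, l₂, hσ, hPE, hpre⟩ := hf {2, 3, 4} (by decide)
  have h1 : f ({2, 3, 4} : Multiset (ZMod 5)) = 2 :=
    first_is_two _ _ _ _ hσ hPE hpre hA hB hC
  obtain ⟨m₁, m₂, hσ', _, hpre'⟩ := hf {0, 2, 3} (by decide)
  have h2 : f ({0, 2, 3} : Multiset (ZMod 5)) = 0 :=
    first_is_zero _ _ _ _ hσ' hpre' hD
  refine ⟨h1, h2, ?_, ?_⟩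
  · rw [h1, h2]; decide
  · intro ht
    have := ht {2, 3, 4} 4 (by decide) 0
    have he : (({2, 3, 4} : Multiset (ZMod 5)).erase 4 + {0}) = {0, 2, 3} := by
      decide
    rw [he, h1, h2] at this
    revert this; decide
end

section
/- Let Γ be the 2×3 grid graph with vertices {(i,j) : i ∈ {1,2}, j ∈ {1,2,3}} and assume agents' preferences are single-peaked. If f is a false-name-proof and Pareto efficient social choice function on Γ, then for any profile θ in which every vertex of Γ is occupied by at least one agent, f(θ) is one of the four corner vertices (1,1), (1,3), (2,1), (2,3). -/
open FNPFL

-- Auxiliary lemmas ----------------------------------------------------------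

/-- Key consequence of false-name-proofness: an agent `u` located in a fully
occupied profile `θ` can pretend that the profile is the small profile
`{u, v, w}`; hence the outcome on `{u,v,w}` cannot be strictly closer to `u`
than the outcome on `θ` is — read contrapositively, from profile `{u,v,w}`
agent `u` can deviate (misreport plus fake identities) to produce `θ`. -/
lemma fnp_triple {V : Type*} [DecidableEq V] (d : V → V → ℕ)
    (f : Multiset V → V) (hFNP : FalseNameProof d f)
    (θ : Multiset V) (hall : ∀ x : V, x ∈ θ) (u v w : V)
    (huv : u ≠ v) (huw : u ≠ w) (hvw : v ≠ w) :
    d u (f {u, v, w}) ≤ d u (f θ) := by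
  have hw : w ∈ θ.erase v := (Multiset.mem_erase_of_ne hvw.symm).mpr (hall w)
  have hu : u ∈ (θ.erase v).erase w :=
    (Multiset.mem_erase_of_ne huw).mpr ((Multiset.mem_erase_of_ne huv).mpr (hall u))
  have hne : (θ.erase v).erase w ≠ 0 := by
    intro h0; rw [h0] at hu; exact absurd hu (Multiset.notMem_zero u)
  have key := hFNP {u, v, w} u (by simp) ((θ.erase v).erase w) hne
  have hrw : ({u, v, w} : Multiset V).erase u + (θ.erase v).erase w = θ := by
    have h1 : ({u, v, w} : Multiset V).erase u = v ::ₘ {w} :=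
      Multiset.erase_cons_head u (v ::ₘ {w})
    rw [h1]
    show v ::ₘ w ::ₘ 0 + (θ.erase v).erase w = θ
    rw [Multiset.cons_add, Multiset.cons_add, zero_add,
      Multiset.cons_erase hw, Multiset.cons_erase (hall v)]
  rwa [hrw] at key

/-- Every vertex of the `2 × 3` grid is one of the six vertices. -/
lemma six (y : Fin 2 × Fin 3) :
    y = ((0 : Fin 2), (0 : Fin 3)) ∨ y = ((0 : Fin 2), (1 : Fin 3)) ∨
    y = ((0 : Fin 2), (2 : Fin 3)) ∨ y = ((1 : Fin 2), (0 : Fin 3)) ∨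
    y = ((1 : Fin 2), (1 : Fin 3)) ∨ y = ((1 : Fin 2), (2 : Fin 3)) := by
  revert y; decide

/-- On the grid, distance zero means equality. -/
lemma grid_eq_of_dist_zero {u v : Fin 2 × Fin 3} (h : gridDist u v = 0) : u = v := by
  revert h; revert u v; decide


/-- on the `2 × 3` grid with single-peaked preferences, any
false-name-proof and Pareto efficient SCF outputs a corner on every profile in
which all six vertices are occupied. (Corners `(1,1),(1,3),(2,1),(2,3)` are
zero-indexed as `(0,0),(0,2),(1,0),(1,2)`.) -/
theorem stmt8 (f : Multiset (Fin 2 × Fin 3) → Fin 2 × Fin 3)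
    (hFNP : FalseNameProof gridDist f) (hPE : ParetoEfficient gridDist f)
    (θ : Multiset (Fin 2 × Fin 3)) (hall : ∀ v : Fin 2 × Fin 3, v ∈ θ) :
    f θ = ((0 : Fin 2), (0 : Fin 3)) ∨ f θ = ((0 : Fin 2), (2 : Fin 3)) ∨
    f θ = ((1 : Fin 2), (0 : Fin 3)) ∨ f θ = ((1 : Fin 2), (2 : Fin 3)) := by
  classical
  by_contra hcon
  push_neg at hcon
  obtain ⟨hc1, hc2, hc3, hc4⟩ := hcon
  -- abbreviations for the six vertices
  set A : Fin 2 × Fin 3 := ((0 : Fin 2), (0 : Fin 3)) with hA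
  set M : Fin 2 × Fin 3 := ((0 : Fin 2), (1 : Fin 3)) with hM
  set B : Fin 2 × Fin 3 := ((0 : Fin 2), (2 : Fin 3)) with hB
  set C : Fin 2 × Fin 3 := ((1 : Fin 2), (0 : Fin 3)) with hC
  set N : Fin 2 × Fin 3 := ((1 : Fin 2), (1 : Fin 3)) with hN
  set D : Fin 2 × Fin 3 := ((1 : Fin 2), (2 : Fin 3)) with hD
  rcases six (f θ) with hm | hm | hm | hm | hm | hm
  · exact hc1 hm
  · -- Case f θ = (0,1): the middle vertex of the top row.
    -- Step 1 : f {A, C, D} = C.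
    have h1 := fnp_triple gridDist f hFNP θ hall A C D (by decide) (by decide) (by decide)
    have h2 := fnp_triple gridDist f hFNP θ hall D A C (by decide) (by decide) (by decide)
    have hset : ({D, A, C} : Multiset (Fin 2 × Fin 3)) = {A, C, D} := by decide
    rw [hset] at h2
    rw [hm] at h1 h2
    have h3 := hPE {A, C, D} (by decide)
    have e1 : f {A, C, D} = C := by
      rcases six (f {A, C, D}) with h | h | h | h | h | h
      · rw [h] at h2; exact absurd h2 (by decide)
      · rw [h] at h3
        exact (h3 C ⟨by decide, C, by decide, by decide⟩).elim
      · rw [h] at h1; exact absurd h1 (by decide)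
      · exact h
      · rw [h] at h1; exact absurd h1 (by decide)
      · rw [h] at h1; exact absurd h1 (by decide)
    -- Step 2 : f {B, C, D} = D.
    have g1 := fnp_triple gridDist f hFNP θ hall B C D (by decide) (by decide) (by decide)
    have g2 := fnp_triple gridDist f hFNP θ hall C B D (by decide) (by decide) (by decide)
    have gset : ({C, B, D} : Multiset (Fin 2 × Fin 3)) = {B, C, D} := by decide
    rw [gset] at g2
    rw [hm] at g1 g2
    have g3 := hPE {B, C, D} (by decide)
    have e2 : f {B, C, D} = D := by
      rcases six (f {B, C, D}) with h | h | h | h | h | h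
      · rw [h] at g1; exact absurd g1 (by decide)
      · rw [h] at g3
        exact (g3 D ⟨by decide, D, by decide, by decide⟩).elim
      · rw [h] at g2; exact absurd g2 (by decide)
      · rw [h] at g1; exact absurd g1 (by decide)
      · rw [h] at g1; exact absurd g1 (by decide)
      · exact h
    -- Step 3 : from the pair profile {C, D}, agent C can deviate to {A, C, D},
    -- agent D can deviate to {B, C, D}; both force f {C, D} to be her own peak.
    have p1 := hFNP {C, D} C (by decide) {A, C} (by decide)
    have p2 := hFNP {C, D} D (by decide) {B, D} (by decide)
    have q1 : ({C, D} : Multiset (Fin 2 × Fin 3)).erase C + {A, C} = {A, C, D} := by decide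
    have q2 : ({C, D} : Multiset (Fin 2 × Fin 3)).erase D + {B, D} = {B, C, D} := by decide
    rw [q1, e1] at p1
    rw [q2, e2] at p2
    have r1 : C = f {C, D} := by
      apply grid_eq_of_dist_zero
      have h0 : gridDist C C = 0 := by decide
      rw [h0] at p1
      omega
    have r2 : D = f {C, D} := by
      apply grid_eq_of_dist_zero
      have h0 : gridDist D D = 0 := by decide
      rw [h0] at p2
      omega
    exact absurd (r1.trans r2.symm) (by decide)
  · exact hc2 hm
  · exact hc3 hm
  · -- Case f θ = (1,1): the middle vertex of the bottom row (symmetric).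
    have h1 := fnp_triple gridDist f hFNP θ hall C A B (by decide) (by decide) (by decide)
    have h2 := fnp_triple gridDist f hFNP θ hall B C A (by decide) (by decide) (by decide)
    have hset : ({B, C, A} : Multiset (Fin 2 × Fin 3)) = {C, A, B} := by decide
    rw [hset] at h2
    rw [hm] at h1 h2
    have h3 := hPE {C, A, B} (by decide)
    have e1 : f {C, A, B} = A := by
      rcases six (f {C, A, B}) with h | h | h | h | h | h
      · exact h
      · rw [h] at h1; exact absurd h1 (by decide)
      · rw [h] at h1; exact absurd h1 (by decide)
      · rw [h] at h2; exact absurd h2 (by decide)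
      · rw [h] at h3
        exact (h3 A ⟨by decide, A, by decide, by decide⟩).elim
      · rw [h] at h1; exact absurd h1 (by decide)
    have g1 := fnp_triple gridDist f hFNP θ hall D A B (by decide) (by decide) (by decide)
    have g2 := fnp_triple gridDist f hFNP θ hall A D B (by decide) (by decide) (by decide)
    have gset : ({A, D, B} : Multiset (Fin 2 × Fin 3)) = {D, A, B} := by decide
    rw [gset] at g2
    rw [hm] at g1 g2
    have g3 := hPE {D, A, B} (by decide)
    have e2 : f {D, A, B} = B := by
      rcases six (f {D, A, B}) with h | h | h | h | h | h
      · rw [h] at g1; exact absurd g1 (by decide)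
      · rw [h] at g1; exact absurd g1 (by decide)
      · exact h
      · rw [h] at g1; exact absurd g1 (by decide)
      · rw [h] at g3
        exact (g3 B ⟨by decide, B, by decide, by decide⟩).elim
      · rw [h] at g2; exact absurd g2 (by decide)
    have p1 := hFNP {A, B} A (by decide) {C, A} (by decide)
    have p2 := hFNP {A, B} B (by decide) {D, B} (by decide)
    have q1 : ({A, B} : Multiset (Fin 2 × Fin 3)).erase A + {C, A} = {C, A, B} := by decide
    have q2 : ({A, B} : Multiset (Fin 2 × Fin 3)).erase B + {D, B} = {D, A, B} := by decide
    rw [q1, e1] at p1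
    rw [q2, e2] at p2
    have r1 : A = f {A, B} := by
      apply grid_eq_of_dist_zero
      have h0 : gridDist A A = 0 := by decide
      rw [h0] at p1
      omega
    have r2 : B = f {A, B} := by
      apply grid_eq_of_dist_zero
      have h0 : gridDist B B = 0 := by decide
      rw [h0] at p2
      omega
    exact absurd (r1.trans r2.symm) (by decide)
  · exact hc4 hm
end

section
/- For any k-dimensional hypergrid graph with k ≥ 3 (a Cartesian product of k ≥ 3 path graphs, each with at least 2 vertices) and single-peaked preferences, there is no false-name-proof and Pareto efficient deterministic social choice function. -/
open FNPFL

/-- Manhattan (= graph) distance on a `k`-dimensional hypergrid. -/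
def hypergridDist {k : ℕ} {n : Fin k → ℕ} (u v : ∀ i : Fin k, Fin (n i)) : ℕ :=
  ∑ i : Fin k, Nat.dist (u i).val (v i).val

namespace FNP12

/-- bit extraction -/
def eb (a j : ℕ) : ℕ := if j = 0 then a % 2 else if j = 1 then a / 2 % 2 else if j = 2 then a / 4 else 0

lemma eb_le (a j : ℕ) (ha : a < 8) : eb a j ≤ 1 := by
  unfold eb; split
  · omega
  · split
    · omega
    · split <;> omega

lemma eb_ge3 (a j : ℕ) (hj : 3 ≤ j) : eb a j = 0 := by
  unfold eb
  rw [if_neg (by omega), if_neg (by omega), if_neg (by omega)]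

/-- Hamming distance on the 3-cube, vertices `Fin 8`. -/
def d8 (a b : Fin 8) : ℕ :=
  Nat.dist (eb a.val 0) (eb b.val 0) + Nat.dist (eb a.val 1) (eb b.val 1)
    + Nat.dist (eb a.val 2) (eb b.val 2)


/-- embedding of the 3-cube into the hypergrid -/
def emb {k : ℕ} (hk : 3 ≤ k) (n : Fin k → ℕ) (hn : ∀ i, 2 ≤ n i) (a : Fin 8) : ∀ i : Fin k, Fin (n i) :=
  fun i => ⟨eb a.val i.val % n i, Nat.mod_lt _ (by have := hn i; omega)⟩

lemma emb_val {k : ℕ} (hk : 3 ≤ k) (n : Fin k → ℕ) (hn : ∀ i, 2 ≤ n i) (a : Fin 8) (i : Fin k) : (emb hk n hn a i).val = eb a.val i.val := by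
  have h1 : eb a.val i.val ≤ 1 := eb_le _ _ a.isLt
  have := hn i
  exact Nat.mod_eq_of_lt (by omega)

/-- clamp a hypergrid point back to the cube -/
def clampF {k : ℕ} (hk : 3 ≤ k) (n : Fin k → ℕ) (hn : ∀ i, 2 ≤ n i) (w : ∀ i : Fin k, Fin (n i)) : Fin 8 :=
  ⟨min (w ⟨0, by omega⟩).val 1 + 2 * min (w ⟨1, by omega⟩).val 1
      + 4 * min (w ⟨2, by omega⟩).val 1, by omega⟩

lemma sum3 {k : ℕ} (hk : 3 ≤ k) (t : Fin k → ℕ) (h0 : ∀ j : Fin k, 3 ≤ j.val → t j = 0) :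
    ∑ j, t j = t ⟨0, by omega⟩ + t ⟨1, by omega⟩ + t ⟨2, by omega⟩ := by
  classical
  set j0 : Fin k := ⟨0, by omega⟩
  set j1 : Fin k := ⟨1, by omega⟩
  set j2 : Fin k := ⟨2, by omega⟩
  have hsub : ∑ j ∈ ({j0, j1, j2} : Finset (Fin k)), t j = ∑ j, t j := by
    apply Finset.sum_subset (Finset.subset_univ _)
    intro x _ hx
    simp only [Finset.mem_insert, Finset.mem_singleton] at hx
    push_neg at hx
    obtain ⟨h1, h2, h3⟩ := hx
    apply h0
    have e1 : x.val ≠ 0 := fun h => h1 (Fin.ext h)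
    have e2 : x.val ≠ 1 := fun h => h2 (Fin.ext h)
    have e3 : x.val ≠ 2 := fun h => h3 (Fin.ext h)
    omega
  rw [← hsub]
  rw [Finset.sum_insert (by simp [j0, j1, j2, Fin.ext_iff]),
    Finset.sum_insert (by simp [j1, j2, Fin.ext_iff]), Finset.sum_singleton]
  omega

lemma emb_isometry {k : ℕ} (hk : 3 ≤ k) (n : Fin k → ℕ) (hn : ∀ i, 2 ≤ n i) (a b : Fin 8) :
    hypergridDist (emb hk n hn a) (emb hk n hn b) = d8 a b := by
  unfold hypergridDist
  rw [sum3 hk]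
  · simp only [emb_val]
    rfl
  · intro j hj
    rw [emb_val, emb_val, eb_ge3 _ _ hj, eb_ge3 _ _ hj]
    simp [Nat.dist]

lemma clamp_emb {k : ℕ} (hk : 3 ≤ k) (n : Fin k → ℕ) (hn : ∀ i, 2 ≤ n i) (a : Fin 8) : clampF hk n hn (emb hk n hn a) = a := by
  apply Fin.ext
  show min (emb hk n hn a ⟨0, by omega⟩).val 1 + 2 * min (emb hk n hn a ⟨1, by omega⟩).val 1
      + 4 * min (emb hk n hn a ⟨2, by omega⟩).val 1 = a.val
  rw [emb_val, emb_val, emb_val]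
  show min (eb a.val 0) 1 + 2 * min (eb a.val 1) 1 + 4 * min (eb a.val 2) 1 = a.val
  have := a.isLt
  simp [eb]
  all_goals omega

lemma emb_inj {k : ℕ} (hk : 3 ≤ k) (n : Fin k → ℕ) (hn : ∀ i, 2 ≤ n i) : Function.Injective (emb hk n hn) := by
  intro a b hab
  have := congrArg (clampF hk n hn) hab
  rwa [clamp_emb hk n hn, clamp_emb hk n hn] at this

lemma clamp_val {k : ℕ} (hk : 3 ≤ k) (n : Fin k → ℕ) (hn : ∀ i, 2 ≤ n i) (w : ∀ i : Fin k, Fin (n i)) (j : Fin k) :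
    (emb hk n hn (clampF hk n hn w) j).val =
      eb (min (w ⟨0, by omega⟩).val 1 + 2 * min (w ⟨1, by omega⟩).val 1
        + 4 * min (w ⟨2, by omega⟩).val 1) j.val := by
  rw [emb_val]; rfl

lemma coord_le {k : ℕ} (hk : 3 ≤ k) (n : Fin k → ℕ) (hn : ∀ i, 2 ≤ n i) (a : Fin 8) (w : ∀ i : Fin k, Fin (n i)) (j : Fin k) :
    Nat.dist (emb hk n hn a j).val (emb hk n hn (clampF hk n hn w) j).val
      ≤ Nat.dist (emb hk n hn a j).val (w j).val := by
  rw [emb_val, clamp_val hk n hn _ _]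
  have ha := eb_le a.val j.val a.isLt
  by_cases h0 : j.val = 0
  · rw [show j = ⟨0, by omega⟩ from Fin.ext h0]
    simp [eb, Nat.dist]
    all_goals omega
  by_cases h1 : j.val = 1
  · rw [show j = ⟨1, by omega⟩ from Fin.ext h1]
    simp [eb, Nat.dist]
    all_goals omega
  by_cases h2 : j.val = 2
  · rw [show j = ⟨2, by omega⟩ from Fin.ext h2]
    simp [eb, Nat.dist]
    all_goals omega
  · rw [eb_ge3 _ _ (by omega), eb_ge3 _ _ (by omega)]
    simp [Nat.dist]

lemma coord_lt {k : ℕ} (hk : 3 ≤ k) (n : Fin k → ℕ) (hn : ∀ i, 2 ≤ n i) (a : Fin 8) (w : ∀ i : Fin k, Fin (n i)) (j : Fin k)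
    (hne : emb hk n hn (clampF hk n hn w) j ≠ w j) :
    Nat.dist (emb hk n hn a j).val (emb hk n hn (clampF hk n hn w) j).val
      < Nat.dist (emb hk n hn a j).val (w j).val := by
  have hv : (emb hk n hn (clampF hk n hn w) j).val ≠ (w j).val := fun h => hne (Fin.ext h)
  rw [clamp_val hk n hn _ _] at hv
  rw [emb_val, clamp_val hk n hn _ _]
  have ha := eb_le a.val j.val a.isLt
  by_cases h0 : j.val = 0
  · rw [show j = ⟨0, by omega⟩ from Fin.ext h0] at hv ⊢
    simp [eb, Nat.dist] at hv ⊢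
    all_goals omega
  by_cases h1 : j.val = 1
  · rw [show j = ⟨1, by omega⟩ from Fin.ext h1] at hv ⊢
    simp [eb, Nat.dist] at hv ⊢
    all_goals omega
  by_cases h2 : j.val = 2
  · rw [show j = ⟨2, by omega⟩ from Fin.ext h2] at hv ⊢
    simp [eb, Nat.dist] at hv ⊢
    all_goals omega
  · have h3 : (3:ℕ) ≤ j.val := by omega
    rw [eb_ge3 _ _ h3] at hv
    rw [eb_ge3 _ _ h3, eb_ge3 _ _ h3]
    simp only [Nat.dist] at hv ⊢
    omega

/-- every Pareto efficient point for a cube-supported profile lies in the cube -/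
lemma pe_in_cube {k : ℕ} (hk : 3 ≤ k) (n : Fin k → ℕ) (hn : ∀ i, 2 ≤ n i) (θ₀ : Multiset (Fin 8)) (hθ : θ₀ ≠ 0) (w : ∀ i : Fin k, Fin (n i))
    (hw : IsPE hypergridDist (θ₀.map (emb hk n hn)) w) :
    emb hk n hn (clampF hk n hn w) = w := by
  by_contra hne
  have hj : ∃ j, emb hk n hn (clampF hk n hn w) j ≠ w j := by
    by_contra h
    push_neg at h
    exact hne (funext h)
  obtain ⟨j, hj⟩ := hj
  obtain ⟨i, hi⟩ := Multiset.exists_mem_of_ne_zero hθ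
  apply hw (emb hk n hn (clampF hk n hn w))
  constructor
  · intro x hx
    obtain ⟨ii, _, rfl⟩ := Multiset.mem_map.mp hx
    exact Finset.sum_le_sum (fun j _ => coord_le hk n hn ii w j)
  · refine ⟨emb hk n hn i, Multiset.mem_map_of_mem _ hi, ?_⟩
    exact Finset.sum_lt_sum (fun j _ => coord_le hk n hn i w j)
      ⟨j, Finset.mem_univ j, coord_lt hk n hn i w j hj⟩

instance {V : Type*} [DecidableEq V] (d : V → V → ℕ) (θ : Multiset V) (v w : V) :
    Decidable (Dom d θ v w) :=
  have : Decidable (∃ i ∈ θ, d i v < d i w) := Multiset.decidableExistsMultiset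
  inferInstanceAs (Decidable ((∀ i ∈ θ, d i v ≤ d i w) ∧ ∃ i ∈ θ, d i v < d i w))

instance {V : Type*} [DecidableEq V] [Fintype V] (d : V → V → ℕ) (θ : Multiset V) (w : V) :
    Decidable (IsPE d θ w) :=
  inferInstanceAs (Decidable (∀ v, ¬ Dom d θ v w))

lemma pruneL {ag xp xq : Fin 8} {Sp Sq Sp' : Finset (Fin 8)}
    (h : ∀ a ∈ Sp, ∀ b ∈ Sq, d8 ag a ≤ d8 ag b → a ∈ Sp')
    (hp : xp ∈ Sp) (hq : xq ∈ Sq) (hd : d8 ag xp ≤ d8 ag xq) : xp ∈ Sp' := h _ hp _ hq hd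

lemma pruneR {ag xp xq : Fin 8} {Sp Sq Sq' : Finset (Fin 8)}
    (h : ∀ a ∈ Sp, ∀ b ∈ Sq, d8 ag a ≤ d8 ag b → b ∈ Sq')
    (hp : xp ∈ Sp) (hq : xq ∈ Sq) (hd : d8 ag xp ≤ d8 ag xq) : xq ∈ Sq' := h _ hp _ hq hd

lemma mem3 {x a0 a1 a2 : Fin 8} (h : x ∈ ({a0, a1, a2} : Finset (Fin 8))) : x = a0 ∨ x = a1 ∨ x = a2 := by simpa using h

lemma mem4 {x a0 a1 a2 a3 : Fin 8} (h : x ∈ ({a0, a1, a2, a3} : Finset (Fin 8))) : x = a0 ∨ x = a1 ∨ x = a2 ∨ x = a3 := by simpa using h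

theorem cube_imposs : ¬ ∃ f : Multiset (Fin 8) → Fin 8,
    FalseNameProof d8 f ∧ ParetoEfficient d8 f := by
  rintro ⟨f, fnp, pe⟩
  obtain ⟨x0, hx0⟩ : ∃ x, f ({1, 2} : Multiset (Fin 8)) = x := ⟨_, rfl⟩
  have hm0 : x0 ∈ ({0, 1, 2, 3} : Finset (Fin 8)) :=
    (show ∀ x : Fin 8, IsPE d8 ({1, 2} : Multiset (Fin 8)) x → x ∈ ({0, 1, 2, 3} : Finset (Fin 8)) by decide) _ (hx0 ▸ pe _ (by decide))
  obtain ⟨x1, hx1⟩ : ∃ x, f ({1, 2, 5} : Multiset (Fin 8)) = x := ⟨_, rfl⟩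
  have hm1 : x1 ∈ ({0, 1, 2, 3, 5} : Finset (Fin 8)) :=
    (show ∀ x : Fin 8, IsPE d8 ({1, 2, 5} : Multiset (Fin 8)) x → x ∈ ({0, 1, 2, 3, 5} : Finset (Fin 8)) by decide) _ (hx1 ▸ pe _ (by decide))
  obtain ⟨x2, hx2⟩ : ∃ x, f ({1, 2, 6} : Multiset (Fin 8)) = x := ⟨_, rfl⟩
  have hm2 : x2 ∈ ({0, 1, 2, 3, 6} : Finset (Fin 8)) :=
    (show ∀ x : Fin 8, IsPE d8 ({1, 2, 6} : Multiset (Fin 8)) x → x ∈ ({0, 1, 2, 3, 6} : Finset (Fin 8)) by decide) _ (hx2 ▸ pe _ (by decide))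
  obtain ⟨x3, hx3⟩ : ∃ x, f ({1, 3, 4} : Multiset (Fin 8)) = x := ⟨_, rfl⟩
  have hm3 : x3 ∈ ({0, 1, 3, 4, 5} : Finset (Fin 8)) :=
    (show ∀ x : Fin 8, IsPE d8 ({1, 3, 4} : Multiset (Fin 8)) x → x ∈ ({0, 1, 3, 4, 5} : Finset (Fin 8)) by decide) _ (hx3 ▸ pe _ (by decide))
  obtain ⟨x4, hx4⟩ : ∃ x, f ({1, 3, 6} : Multiset (Fin 8)) = x := ⟨_, rfl⟩
  have hm4 : x4 ∈ ({1, 2, 3, 6, 7} : Finset (Fin 8)) :=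
    (show ∀ x : Fin 8, IsPE d8 ({1, 3, 6} : Multiset (Fin 8)) x → x ∈ ({1, 2, 3, 6, 7} : Finset (Fin 8)) by decide) _ (hx4 ▸ pe _ (by decide))
  obtain ⟨x5, hx5⟩ : ∃ x, f ({1, 4} : Multiset (Fin 8)) = x := ⟨_, rfl⟩
  have hm5 : x5 ∈ ({0, 1, 4, 5} : Finset (Fin 8)) :=
    (show ∀ x : Fin 8, IsPE d8 ({1, 4} : Multiset (Fin 8)) x → x ∈ ({0, 1, 4, 5} : Finset (Fin 8)) by decide) _ (hx5 ▸ pe _ (by decide))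
  obtain ⟨x6, hx6⟩ : ∃ x, f ({1, 4, 6} : Multiset (Fin 8)) = x := ⟨_, rfl⟩
  have hm6 : x6 ∈ ({0, 1, 4, 5, 6} : Finset (Fin 8)) :=
    (show ∀ x : Fin 8, IsPE d8 ({1, 4, 6} : Multiset (Fin 8)) x → x ∈ ({0, 1, 4, 5, 6} : Finset (Fin 8)) by decide) _ (hx6 ▸ pe _ (by decide))
  obtain ⟨x7, hx7⟩ : ∃ x, f ({1, 5, 6} : Multiset (Fin 8)) = x := ⟨_, rfl⟩
  have hm7 : x7 ∈ ({1, 4, 5, 6, 7} : Finset (Fin 8)) :=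
    (show ∀ x : Fin 8, IsPE d8 ({1, 5, 6} : Multiset (Fin 8)) x → x ∈ ({1, 4, 5, 6, 7} : Finset (Fin 8)) by decide) _ (hx7 ▸ pe _ (by decide))
  obtain ⟨x8, hx8⟩ : ∃ x, f ({1, 6} : Multiset (Fin 8)) = x := ⟨_, rfl⟩
  have hm8 : x8 ∈ ({0, 1, 2, 3, 4, 5, 6, 7} : Finset (Fin 8)) :=
    (show ∀ x : Fin 8, IsPE d8 ({1, 6} : Multiset (Fin 8)) x → x ∈ ({0, 1, 2, 3, 4, 5, 6, 7} : Finset (Fin 8)) by decide) _ (hx8 ▸ pe _ (by decide))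
  obtain ⟨x9, hx9⟩ : ∃ x, f ({2, 3, 4} : Multiset (Fin 8)) = x := ⟨_, rfl⟩
  have hm9 : x9 ∈ ({0, 2, 3, 4, 6} : Finset (Fin 8)) :=
    (show ∀ x : Fin 8, IsPE d8 ({2, 3, 4} : Multiset (Fin 8)) x → x ∈ ({0, 2, 3, 4, 6} : Finset (Fin 8)) by decide) _ (hx9 ▸ pe _ (by decide))
  obtain ⟨x10, hx10⟩ : ∃ x, f ({2, 3, 5} : Multiset (Fin 8)) = x := ⟨_, rfl⟩
  have hm10 : x10 ∈ ({1, 2, 3, 5, 7} : Finset (Fin 8)) :=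
    (show ∀ x : Fin 8, IsPE d8 ({2, 3, 5} : Multiset (Fin 8)) x → x ∈ ({1, 2, 3, 5, 7} : Finset (Fin 8)) by decide) _ (hx10 ▸ pe _ (by decide))
  obtain ⟨x11, hx11⟩ : ∃ x, f ({2, 4} : Multiset (Fin 8)) = x := ⟨_, rfl⟩
  have hm11 : x11 ∈ ({0, 2, 4, 6} : Finset (Fin 8)) :=
    (show ∀ x : Fin 8, IsPE d8 ({2, 4} : Multiset (Fin 8)) x → x ∈ ({0, 2, 4, 6} : Finset (Fin 8)) by decide) _ (hx11 ▸ pe _ (by decide))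
  obtain ⟨x12, hx12⟩ : ∃ x, f ({2, 4, 5} : Multiset (Fin 8)) = x := ⟨_, rfl⟩
  have hm12 : x12 ∈ ({0, 2, 4, 5, 6} : Finset (Fin 8)) :=
    (show ∀ x : Fin 8, IsPE d8 ({2, 4, 5} : Multiset (Fin 8)) x → x ∈ ({0, 2, 4, 5, 6} : Finset (Fin 8)) by decide) _ (hx12 ▸ pe _ (by decide))
  obtain ⟨x13, hx13⟩ : ∃ x, f ({2, 5} : Multiset (Fin 8)) = x := ⟨_, rfl⟩
  have hm13 : x13 ∈ ({0, 1, 2, 3, 4, 5, 6, 7} : Finset (Fin 8)) :=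
    (show ∀ x : Fin 8, IsPE d8 ({2, 5} : Multiset (Fin 8)) x → x ∈ ({0, 1, 2, 3, 4, 5, 6, 7} : Finset (Fin 8)) by decide) _ (hx13 ▸ pe _ (by decide))
  obtain ⟨x14, hx14⟩ : ∃ x, f ({2, 5, 6} : Multiset (Fin 8)) = x := ⟨_, rfl⟩
  have hm14 : x14 ∈ ({2, 4, 5, 6, 7} : Finset (Fin 8)) :=
    (show ∀ x : Fin 8, IsPE d8 ({2, 5, 6} : Multiset (Fin 8)) x → x ∈ ({2, 4, 5, 6, 7} : Finset (Fin 8)) by decide) _ (hx14 ▸ pe _ (by decide))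
  obtain ⟨x15, hx15⟩ : ∃ x, f ({3, 4, 4} : Multiset (Fin 8)) = x := ⟨_, rfl⟩
  have hm15 : x15 ∈ ({0, 1, 2, 3, 4, 5, 6, 7} : Finset (Fin 8)) :=
    (show ∀ x : Fin 8, IsPE d8 ({3, 4, 4} : Multiset (Fin 8)) x → x ∈ ({0, 1, 2, 3, 4, 5, 6, 7} : Finset (Fin 8)) by decide) _ (hx15 ▸ pe _ (by decide))
  obtain ⟨x16, hx16⟩ : ∃ x, f ({3, 4, 5} : Multiset (Fin 8)) = x := ⟨_, rfl⟩
  have hm16 : x16 ∈ ({1, 3, 4, 5, 7} : Finset (Fin 8)) :=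
    (show ∀ x : Fin 8, IsPE d8 ({3, 4, 5} : Multiset (Fin 8)) x → x ∈ ({1, 3, 4, 5, 7} : Finset (Fin 8)) by decide) _ (hx16 ▸ pe _ (by decide))
  obtain ⟨x17, hx17⟩ : ∃ x, f ({3, 4, 6} : Multiset (Fin 8)) = x := ⟨_, rfl⟩
  have hm17 : x17 ∈ ({2, 3, 4, 6, 7} : Finset (Fin 8)) :=
    (show ∀ x : Fin 8, IsPE d8 ({3, 4, 6} : Multiset (Fin 8)) x → x ∈ ({2, 3, 4, 6, 7} : Finset (Fin 8)) by decide) _ (hx17 ▸ pe _ (by decide))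
  obtain ⟨x18, hx18⟩ : ∃ x, f ({3, 5} : Multiset (Fin 8)) = x := ⟨_, rfl⟩
  have hm18 : x18 ∈ ({1, 3, 5, 7} : Finset (Fin 8)) :=
    (show ∀ x : Fin 8, IsPE d8 ({3, 5} : Multiset (Fin 8)) x → x ∈ ({1, 3, 5, 7} : Finset (Fin 8)) by decide) _ (hx18 ▸ pe _ (by decide))
  obtain ⟨x19, hx19⟩ : ∃ x, f ({3, 5, 6} : Multiset (Fin 8)) = x := ⟨_, rfl⟩
  have hm19 : x19 ∈ ({3, 5, 6, 7} : Finset (Fin 8)) :=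
    (show ∀ x : Fin 8, IsPE d8 ({3, 5, 6} : Multiset (Fin 8)) x → x ∈ ({3, 5, 6, 7} : Finset (Fin 8)) by decide) _ (hx19 ▸ pe _ (by decide))
  obtain ⟨x20, hx20⟩ : ∃ x, f ({3, 6} : Multiset (Fin 8)) = x := ⟨_, rfl⟩
  have hm20 : x20 ∈ ({2, 3, 6, 7} : Finset (Fin 8)) :=
    (show ∀ x : Fin 8, IsPE d8 ({3, 6} : Multiset (Fin 8)) x → x ∈ ({2, 3, 6, 7} : Finset (Fin 8)) by decide) _ (hx20 ▸ pe _ (by decide))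
  obtain ⟨x21, hx21⟩ : ∃ x, f ({4, 4, 7} : Multiset (Fin 8)) = x := ⟨_, rfl⟩
  have hm21 : x21 ∈ ({4, 5, 6, 7} : Finset (Fin 8)) :=
    (show ∀ x : Fin 8, IsPE d8 ({4, 4, 7} : Multiset (Fin 8)) x → x ∈ ({4, 5, 6, 7} : Finset (Fin 8)) by decide) _ (hx21 ▸ pe _ (by decide))
  obtain ⟨x22, hx22⟩ : ∃ x, f ({4, 7} : Multiset (Fin 8)) = x := ⟨_, rfl⟩
  have hm22 : x22 ∈ ({4, 5, 6, 7} : Finset (Fin 8)) :=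
    (show ∀ x : Fin 8, IsPE d8 ({4, 7} : Multiset (Fin 8)) x → x ∈ ({4, 5, 6, 7} : Finset (Fin 8)) by decide) _ (hx22 ▸ pe _ (by decide))
  obtain ⟨x23, hx23⟩ : ∃ x, f ({5, 6} : Multiset (Fin 8)) = x := ⟨_, rfl⟩
  have hm23 : x23 ∈ ({4, 5, 6, 7} : Finset (Fin 8)) :=
    (show ∀ x : Fin 8, IsPE d8 ({5, 6} : Multiset (Fin 8)) x → x ∈ ({4, 5, 6, 7} : Finset (Fin 8)) by decide) _ (hx23 ▸ pe _ (by decide))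
  have hc0 : d8 1 x0 ≤ d8 1 x1 := by
    have h := fnp ({1, 2} : Multiset (Fin 8)) 1 (by decide) ({1, 5} : Multiset (Fin 8)) (by decide)
    rw [show (({1, 2} : Multiset (Fin 8)).erase 1 + ({1, 5} : Multiset (Fin 8))) = ({1, 2, 5} : Multiset (Fin 8)) from by decide, hx0, hx1] at h
    exact h
  have hc1 : d8 1 x0 ≤ d8 1 x2 := by
    have h := fnp ({1, 2} : Multiset (Fin 8)) 1 (by decide) ({1, 6} : Multiset (Fin 8)) (by decide)
    rw [show (({1, 2} : Multiset (Fin 8)).erase 1 + ({1, 6} : Multiset (Fin 8))) = ({1, 2, 6} : Multiset (Fin 8)) from by decide, hx0, hx2] at h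
    exact h
  have hc2 : d8 1 x0 ≤ d8 1 x9 := by
    have h := fnp ({1, 2} : Multiset (Fin 8)) 1 (by decide) ({3, 4} : Multiset (Fin 8)) (by decide)
    rw [show (({1, 2} : Multiset (Fin 8)).erase 1 + ({3, 4} : Multiset (Fin 8))) = ({2, 3, 4} : Multiset (Fin 8)) from by decide, hx0, hx9] at h
    exact h
  have hc3 : d8 1 x0 ≤ d8 1 x11 := by
    have h := fnp ({1, 2} : Multiset (Fin 8)) 1 (by decide) ({4} : Multiset (Fin 8)) (by decide)
    rw [show (({1, 2} : Multiset (Fin 8)).erase 1 + ({4} : Multiset (Fin 8))) = ({2, 4} : Multiset (Fin 8)) from by decide, hx0, hx11] at h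
    exact h
  have hc4 : d8 1 x0 ≤ d8 1 x12 := by
    have h := fnp ({1, 2} : Multiset (Fin 8)) 1 (by decide) ({4, 5} : Multiset (Fin 8)) (by decide)
    rw [show (({1, 2} : Multiset (Fin 8)).erase 1 + ({4, 5} : Multiset (Fin 8))) = ({2, 4, 5} : Multiset (Fin 8)) from by decide, hx0, hx12] at h
    exact h
  have hc5 : d8 1 x0 ≤ d8 1 x13 := by
    have h := fnp ({1, 2} : Multiset (Fin 8)) 1 (by decide) ({5} : Multiset (Fin 8)) (by decide)
    rw [show (({1, 2} : Multiset (Fin 8)).erase 1 + ({5} : Multiset (Fin 8))) = ({2, 5} : Multiset (Fin 8)) from by decide, hx0, hx13] at h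
    exact h
  have hc6 : d8 2 x0 ≤ d8 2 x1 := by
    have h := fnp ({1, 2} : Multiset (Fin 8)) 2 (by decide) ({2, 5} : Multiset (Fin 8)) (by decide)
    rw [show (({1, 2} : Multiset (Fin 8)).erase 2 + ({2, 5} : Multiset (Fin 8))) = ({1, 2, 5} : Multiset (Fin 8)) from by decide, hx0, hx1] at h
    exact h
  have hc7 : d8 2 x0 ≤ d8 2 x2 := by
    have h := fnp ({1, 2} : Multiset (Fin 8)) 2 (by decide) ({2, 6} : Multiset (Fin 8)) (by decide)
    rw [show (({1, 2} : Multiset (Fin 8)).erase 2 + ({2, 6} : Multiset (Fin 8))) = ({1, 2, 6} : Multiset (Fin 8)) from by decide, hx0, hx2] at h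
    exact h
  have hc8 : d8 2 x0 ≤ d8 2 x3 := by
    have h := fnp ({1, 2} : Multiset (Fin 8)) 2 (by decide) ({3, 4} : Multiset (Fin 8)) (by decide)
    rw [show (({1, 2} : Multiset (Fin 8)).erase 2 + ({3, 4} : Multiset (Fin 8))) = ({1, 3, 4} : Multiset (Fin 8)) from by decide, hx0, hx3] at h
    exact h
  have hc9 : d8 2 x0 ≤ d8 2 x4 := by
    have h := fnp ({1, 2} : Multiset (Fin 8)) 2 (by decide) ({3, 6} : Multiset (Fin 8)) (by decide)
    rw [show (({1, 2} : Multiset (Fin 8)).erase 2 + ({3, 6} : Multiset (Fin 8))) = ({1, 3, 6} : Multiset (Fin 8)) from by decide, hx0, hx4] at h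
    exact h
  have hc10 : d8 2 x0 ≤ d8 2 x5 := by
    have h := fnp ({1, 2} : Multiset (Fin 8)) 2 (by decide) ({4} : Multiset (Fin 8)) (by decide)
    rw [show (({1, 2} : Multiset (Fin 8)).erase 2 + ({4} : Multiset (Fin 8))) = ({1, 4} : Multiset (Fin 8)) from by decide, hx0, hx5] at h
    exact h
  have hc11 : d8 2 x0 ≤ d8 2 x6 := by
    have h := fnp ({1, 2} : Multiset (Fin 8)) 2 (by decide) ({4, 6} : Multiset (Fin 8)) (by decide)
    rw [show (({1, 2} : Multiset (Fin 8)).erase 2 + ({4, 6} : Multiset (Fin 8))) = ({1, 4, 6} : Multiset (Fin 8)) from by decide, hx0, hx6] at h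
    exact h
  have hc12 : d8 2 x0 ≤ d8 2 x8 := by
    have h := fnp ({1, 2} : Multiset (Fin 8)) 2 (by decide) ({6} : Multiset (Fin 8)) (by decide)
    rw [show (({1, 2} : Multiset (Fin 8)).erase 2 + ({6} : Multiset (Fin 8))) = ({1, 6} : Multiset (Fin 8)) from by decide, hx0, hx8] at h
    exact h
  have hc13 : d8 1 x1 ≤ d8 1 x10 := by
    have h := fnp ({1, 2, 5} : Multiset (Fin 8)) 1 (by decide) ({3} : Multiset (Fin 8)) (by decide)
    rw [show (({1, 2, 5} : Multiset (Fin 8)).erase 1 + ({3} : Multiset (Fin 8))) = ({2, 3, 5} : Multiset (Fin 8)) from by decide, hx1, hx10] at h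
    exact h
  have hc14 : d8 2 x1 ≤ d8 2 x7 := by
    have h := fnp ({1, 2, 5} : Multiset (Fin 8)) 2 (by decide) ({6} : Multiset (Fin 8)) (by decide)
    rw [show (({1, 2, 5} : Multiset (Fin 8)).erase 2 + ({6} : Multiset (Fin 8))) = ({1, 5, 6} : Multiset (Fin 8)) from by decide, hx1, hx7] at h
    exact h
  have hc15 : d8 5 x1 ≤ d8 5 x2 := by
    have h := fnp ({1, 2, 5} : Multiset (Fin 8)) 5 (by decide) ({6} : Multiset (Fin 8)) (by decide)
    rw [show (({1, 2, 5} : Multiset (Fin 8)).erase 5 + ({6} : Multiset (Fin 8))) = ({1, 2, 6} : Multiset (Fin 8)) from by decide, hx1, hx2] at h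
    exact h
  have hc16 : d8 1 x2 ≤ d8 1 x14 := by
    have h := fnp ({1, 2, 6} : Multiset (Fin 8)) 1 (by decide) ({5} : Multiset (Fin 8)) (by decide)
    rw [show (({1, 2, 6} : Multiset (Fin 8)).erase 1 + ({5} : Multiset (Fin 8))) = ({2, 5, 6} : Multiset (Fin 8)) from by decide, hx2, hx14] at h
    exact h
  have hc17 : d8 6 x2 ≤ d8 6 x1 := by
    have h := fnp ({1, 2, 6} : Multiset (Fin 8)) 6 (by decide) ({5} : Multiset (Fin 8)) (by decide)
    rw [show (({1, 2, 6} : Multiset (Fin 8)).erase 6 + ({5} : Multiset (Fin 8))) = ({1, 2, 5} : Multiset (Fin 8)) from by decide, hx2, hx1] at h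
    exact h
  have hc18 : d8 3 x3 ≤ d8 3 x6 := by
    have h := fnp ({1, 3, 4} : Multiset (Fin 8)) 3 (by decide) ({6} : Multiset (Fin 8)) (by decide)
    rw [show (({1, 3, 4} : Multiset (Fin 8)).erase 3 + ({6} : Multiset (Fin 8))) = ({1, 4, 6} : Multiset (Fin 8)) from by decide, hx3, hx6] at h
    exact h
  have hc19 : d8 4 x3 ≤ d8 4 x4 := by
    have h := fnp ({1, 3, 4} : Multiset (Fin 8)) 4 (by decide) ({6} : Multiset (Fin 8)) (by decide)
    rw [show (({1, 3, 4} : Multiset (Fin 8)).erase 4 + ({6} : Multiset (Fin 8))) = ({1, 3, 6} : Multiset (Fin 8)) from by decide, hx3, hx4] at h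
    exact h
  have hc20 : d8 1 x4 ≤ d8 1 x19 := by
    have h := fnp ({1, 3, 6} : Multiset (Fin 8)) 1 (by decide) ({5} : Multiset (Fin 8)) (by decide)
    rw [show (({1, 3, 6} : Multiset (Fin 8)).erase 1 + ({5} : Multiset (Fin 8))) = ({3, 5, 6} : Multiset (Fin 8)) from by decide, hx4, hx19] at h
    exact h
  have hc21 : d8 3 x4 ≤ d8 3 x2 := by
    have h := fnp ({1, 3, 6} : Multiset (Fin 8)) 3 (by decide) ({2} : Multiset (Fin 8)) (by decide)
    rw [show (({1, 3, 6} : Multiset (Fin 8)).erase 3 + ({2} : Multiset (Fin 8))) = ({1, 2, 6} : Multiset (Fin 8)) from by decide, hx4, hx2] at h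
    exact h
  have hc22 : d8 1 x5 ≤ d8 1 x3 := by
    have h := fnp ({1, 4} : Multiset (Fin 8)) 1 (by decide) ({1, 3} : Multiset (Fin 8)) (by decide)
    rw [show (({1, 4} : Multiset (Fin 8)).erase 1 + ({1, 3} : Multiset (Fin 8))) = ({1, 3, 4} : Multiset (Fin 8)) from by decide, hx5, hx3] at h
    exact h
  have hc23 : d8 1 x5 ≤ d8 1 x12 := by
    have h := fnp ({1, 4} : Multiset (Fin 8)) 1 (by decide) ({2, 5} : Multiset (Fin 8)) (by decide)
    rw [show (({1, 4} : Multiset (Fin 8)).erase 1 + ({2, 5} : Multiset (Fin 8))) = ({2, 4, 5} : Multiset (Fin 8)) from by decide, hx5, hx12] at h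
    exact h
  have hc24 : d8 1 x5 ≤ d8 1 x15 := by
    have h := fnp ({1, 4} : Multiset (Fin 8)) 1 (by decide) ({3, 4} : Multiset (Fin 8)) (by decide)
    rw [show (({1, 4} : Multiset (Fin 8)).erase 1 + ({3, 4} : Multiset (Fin 8))) = ({3, 4, 4} : Multiset (Fin 8)) from by decide, hx5, hx15] at h
    exact h
  have hc25 : d8 1 x5 ≤ d8 1 x16 := by
    have h := fnp ({1, 4} : Multiset (Fin 8)) 1 (by decide) ({3, 5} : Multiset (Fin 8)) (by decide)
    rw [show (({1, 4} : Multiset (Fin 8)).erase 1 + ({3, 5} : Multiset (Fin 8))) = ({3, 4, 5} : Multiset (Fin 8)) from by decide, hx5, hx16] at h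
    exact h
  have hc26 : d8 4 x5 ≤ d8 4 x0 := by
    have h := fnp ({1, 4} : Multiset (Fin 8)) 4 (by decide) ({2} : Multiset (Fin 8)) (by decide)
    rw [show (({1, 4} : Multiset (Fin 8)).erase 4 + ({2} : Multiset (Fin 8))) = ({1, 2} : Multiset (Fin 8)) from by decide, hx5, hx0] at h
    exact h
  have hc27 : d8 4 x5 ≤ d8 4 x6 := by
    have h := fnp ({1, 4} : Multiset (Fin 8)) 4 (by decide) ({4, 6} : Multiset (Fin 8)) (by decide)
    rw [show (({1, 4} : Multiset (Fin 8)).erase 4 + ({4, 6} : Multiset (Fin 8))) = ({1, 4, 6} : Multiset (Fin 8)) from by decide, hx5, hx6] at h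
    exact h
  have hc28 : d8 4 x6 ≤ d8 4 x7 := by
    have h := fnp ({1, 4, 6} : Multiset (Fin 8)) 4 (by decide) ({5} : Multiset (Fin 8)) (by decide)
    rw [show (({1, 4, 6} : Multiset (Fin 8)).erase 4 + ({5} : Multiset (Fin 8))) = ({1, 5, 6} : Multiset (Fin 8)) from by decide, hx6, hx7] at h
    exact h
  have hc29 : d8 1 x7 ≤ d8 1 x19 := by
    have h := fnp ({1, 5, 6} : Multiset (Fin 8)) 1 (by decide) ({3} : Multiset (Fin 8)) (by decide)
    rw [show (({1, 5, 6} : Multiset (Fin 8)).erase 1 + ({3} : Multiset (Fin 8))) = ({3, 5, 6} : Multiset (Fin 8)) from by decide, hx7, hx19] at h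
    exact h
  have hc30 : d8 5 x7 ≤ d8 5 x6 := by
    have h := fnp ({1, 5, 6} : Multiset (Fin 8)) 5 (by decide) ({4} : Multiset (Fin 8)) (by decide)
    rw [show (({1, 5, 6} : Multiset (Fin 8)).erase 5 + ({4} : Multiset (Fin 8))) = ({1, 4, 6} : Multiset (Fin 8)) from by decide, hx7, hx6] at h
    exact h
  have hc31 : d8 1 x8 ≤ d8 1 x2 := by
    have h := fnp ({1, 6} : Multiset (Fin 8)) 1 (by decide) ({1, 2} : Multiset (Fin 8)) (by decide)
    rw [show (({1, 6} : Multiset (Fin 8)).erase 1 + ({1, 2} : Multiset (Fin 8))) = ({1, 2, 6} : Multiset (Fin 8)) from by decide, hx8, hx2] at h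
    exact h
  have hc32 : d8 1 x8 ≤ d8 1 x4 := by
    have h := fnp ({1, 6} : Multiset (Fin 8)) 1 (by decide) ({1, 3} : Multiset (Fin 8)) (by decide)
    rw [show (({1, 6} : Multiset (Fin 8)).erase 1 + ({1, 3} : Multiset (Fin 8))) = ({1, 3, 6} : Multiset (Fin 8)) from by decide, hx8, hx4] at h
    exact h
  have hc33 : d8 1 x8 ≤ d8 1 x6 := by
    have h := fnp ({1, 6} : Multiset (Fin 8)) 1 (by decide) ({1, 4} : Multiset (Fin 8)) (by decide)
    rw [show (({1, 6} : Multiset (Fin 8)).erase 1 + ({1, 4} : Multiset (Fin 8))) = ({1, 4, 6} : Multiset (Fin 8)) from by decide, hx8, hx6] at h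
    exact h
  have hc34 : d8 1 x8 ≤ d8 1 x7 := by
    have h := fnp ({1, 6} : Multiset (Fin 8)) 1 (by decide) ({1, 5} : Multiset (Fin 8)) (by decide)
    rw [show (({1, 6} : Multiset (Fin 8)).erase 1 + ({1, 5} : Multiset (Fin 8))) = ({1, 5, 6} : Multiset (Fin 8)) from by decide, hx8, hx7] at h
    exact h
  have hc35 : d8 1 x8 ≤ d8 1 x14 := by
    have h := fnp ({1, 6} : Multiset (Fin 8)) 1 (by decide) ({2, 5} : Multiset (Fin 8)) (by decide)
    rw [show (({1, 6} : Multiset (Fin 8)).erase 1 + ({2, 5} : Multiset (Fin 8))) = ({2, 5, 6} : Multiset (Fin 8)) from by decide, hx8, hx14] at h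
    exact h
  have hc36 : d8 1 x8 ≤ d8 1 x20 := by
    have h := fnp ({1, 6} : Multiset (Fin 8)) 1 (by decide) ({3} : Multiset (Fin 8)) (by decide)
    rw [show (({1, 6} : Multiset (Fin 8)).erase 1 + ({3} : Multiset (Fin 8))) = ({3, 6} : Multiset (Fin 8)) from by decide, hx8, hx20] at h
    exact h
  have hc37 : d8 1 x8 ≤ d8 1 x23 := by
    have h := fnp ({1, 6} : Multiset (Fin 8)) 1 (by decide) ({5} : Multiset (Fin 8)) (by decide)
    rw [show (({1, 6} : Multiset (Fin 8)).erase 1 + ({5} : Multiset (Fin 8))) = ({5, 6} : Multiset (Fin 8)) from by decide, hx8, hx23] at h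
    exact h
  have hc38 : d8 6 x8 ≤ d8 6 x2 := by
    have h := fnp ({1, 6} : Multiset (Fin 8)) 6 (by decide) ({2, 6} : Multiset (Fin 8)) (by decide)
    rw [show (({1, 6} : Multiset (Fin 8)).erase 6 + ({2, 6} : Multiset (Fin 8))) = ({1, 2, 6} : Multiset (Fin 8)) from by decide, hx8, hx2] at h
    exact h
  have hc39 : d8 6 x8 ≤ d8 6 x3 := by
    have h := fnp ({1, 6} : Multiset (Fin 8)) 6 (by decide) ({3, 4} : Multiset (Fin 8)) (by decide)
    rw [show (({1, 6} : Multiset (Fin 8)).erase 6 + ({3, 4} : Multiset (Fin 8))) = ({1, 3, 4} : Multiset (Fin 8)) from by decide, hx8, hx3] at h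
    exact h
  have hc40 : d8 6 x8 ≤ d8 6 x4 := by
    have h := fnp ({1, 6} : Multiset (Fin 8)) 6 (by decide) ({3, 6} : Multiset (Fin 8)) (by decide)
    rw [show (({1, 6} : Multiset (Fin 8)).erase 6 + ({3, 6} : Multiset (Fin 8))) = ({1, 3, 6} : Multiset (Fin 8)) from by decide, hx8, hx4] at h
    exact h
  have hc41 : d8 6 x8 ≤ d8 6 x5 := by
    have h := fnp ({1, 6} : Multiset (Fin 8)) 6 (by decide) ({4} : Multiset (Fin 8)) (by decide)
    rw [show (({1, 6} : Multiset (Fin 8)).erase 6 + ({4} : Multiset (Fin 8))) = ({1, 4} : Multiset (Fin 8)) from by decide, hx8, hx5] at h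
    exact h
  have hc42 : d8 6 x8 ≤ d8 6 x6 := by
    have h := fnp ({1, 6} : Multiset (Fin 8)) 6 (by decide) ({4, 6} : Multiset (Fin 8)) (by decide)
    rw [show (({1, 6} : Multiset (Fin 8)).erase 6 + ({4, 6} : Multiset (Fin 8))) = ({1, 4, 6} : Multiset (Fin 8)) from by decide, hx8, hx6] at h
    exact h
  have hc43 : d8 6 x8 ≤ d8 6 x7 := by
    have h := fnp ({1, 6} : Multiset (Fin 8)) 6 (by decide) ({5, 6} : Multiset (Fin 8)) (by decide)
    rw [show (({1, 6} : Multiset (Fin 8)).erase 6 + ({5, 6} : Multiset (Fin 8))) = ({1, 5, 6} : Multiset (Fin 8)) from by decide, hx8, hx7] at h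
    exact h
  have hc44 : d8 2 x9 ≤ d8 2 x17 := by
    have h := fnp ({2, 3, 4} : Multiset (Fin 8)) 2 (by decide) ({6} : Multiset (Fin 8)) (by decide)
    rw [show (({2, 3, 4} : Multiset (Fin 8)).erase 2 + ({6} : Multiset (Fin 8))) = ({3, 4, 6} : Multiset (Fin 8)) from by decide, hx9, hx17] at h
    exact h
  have hc45 : d8 3 x9 ≤ d8 3 x12 := by
    have h := fnp ({2, 3, 4} : Multiset (Fin 8)) 3 (by decide) ({5} : Multiset (Fin 8)) (by decide)
    rw [show (({2, 3, 4} : Multiset (Fin 8)).erase 3 + ({5} : Multiset (Fin 8))) = ({2, 4, 5} : Multiset (Fin 8)) from by decide, hx9, hx12] at h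
    exact h
  have hc46 : d8 4 x9 ≤ d8 4 x10 := by
    have h := fnp ({2, 3, 4} : Multiset (Fin 8)) 4 (by decide) ({5} : Multiset (Fin 8)) (by decide)
    rw [show (({2, 3, 4} : Multiset (Fin 8)).erase 4 + ({5} : Multiset (Fin 8))) = ({2, 3, 5} : Multiset (Fin 8)) from by decide, hx9, hx10] at h
    exact h
  have hc47 : d8 3 x10 ≤ d8 3 x1 := by
    have h := fnp ({2, 3, 5} : Multiset (Fin 8)) 3 (by decide) ({1} : Multiset (Fin 8)) (by decide)
    rw [show (({2, 3, 5} : Multiset (Fin 8)).erase 3 + ({1} : Multiset (Fin 8))) = ({1, 2, 5} : Multiset (Fin 8)) from by decide, hx10, hx1] at h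
    exact h
  have hc48 : d8 3 x10 ≤ d8 3 x14 := by
    have h := fnp ({2, 3, 5} : Multiset (Fin 8)) 3 (by decide) ({6} : Multiset (Fin 8)) (by decide)
    rw [show (({2, 3, 5} : Multiset (Fin 8)).erase 3 + ({6} : Multiset (Fin 8))) = ({2, 5, 6} : Multiset (Fin 8)) from by decide, hx10, hx14] at h
    exact h
  have hc49 : d8 5 x10 ≤ d8 5 x9 := by
    have h := fnp ({2, 3, 5} : Multiset (Fin 8)) 5 (by decide) ({4} : Multiset (Fin 8)) (by decide)
    rw [show (({2, 3, 5} : Multiset (Fin 8)).erase 5 + ({4} : Multiset (Fin 8))) = ({2, 3, 4} : Multiset (Fin 8)) from by decide, hx10, hx9] at h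
    exact h
  have hc50 : d8 2 x11 ≤ d8 2 x9 := by
    have h := fnp ({2, 4} : Multiset (Fin 8)) 2 (by decide) ({2, 3} : Multiset (Fin 8)) (by decide)
    rw [show (({2, 4} : Multiset (Fin 8)).erase 2 + ({2, 3} : Multiset (Fin 8))) = ({2, 3, 4} : Multiset (Fin 8)) from by decide, hx11, hx9] at h
    exact h
  have hc51 : d8 2 x11 ≤ d8 2 x15 := by
    have h := fnp ({2, 4} : Multiset (Fin 8)) 2 (by decide) ({3, 4} : Multiset (Fin 8)) (by decide)
    rw [show (({2, 4} : Multiset (Fin 8)).erase 2 + ({3, 4} : Multiset (Fin 8))) = ({3, 4, 4} : Multiset (Fin 8)) from by decide, hx11, hx15] at h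
    exact h
  have hc52 : d8 2 x11 ≤ d8 2 x17 := by
    have h := fnp ({2, 4} : Multiset (Fin 8)) 2 (by decide) ({3, 6} : Multiset (Fin 8)) (by decide)
    rw [show (({2, 4} : Multiset (Fin 8)).erase 2 + ({3, 6} : Multiset (Fin 8))) = ({3, 4, 6} : Multiset (Fin 8)) from by decide, hx11, hx17] at h
    exact h
  have hc53 : d8 4 x11 ≤ d8 4 x0 := by
    have h := fnp ({2, 4} : Multiset (Fin 8)) 4 (by decide) ({1} : Multiset (Fin 8)) (by decide)
    rw [show (({2, 4} : Multiset (Fin 8)).erase 4 + ({1} : Multiset (Fin 8))) = ({1, 2} : Multiset (Fin 8)) from by decide, hx11, hx0] at h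
    exact h
  have hc54 : d8 4 x11 ≤ d8 4 x9 := by
    have h := fnp ({2, 4} : Multiset (Fin 8)) 4 (by decide) ({3, 4} : Multiset (Fin 8)) (by decide)
    rw [show (({2, 4} : Multiset (Fin 8)).erase 4 + ({3, 4} : Multiset (Fin 8))) = ({2, 3, 4} : Multiset (Fin 8)) from by decide, hx11, hx9] at h
    exact h
  have hc55 : d8 4 x11 ≤ d8 4 x12 := by
    have h := fnp ({2, 4} : Multiset (Fin 8)) 4 (by decide) ({4, 5} : Multiset (Fin 8)) (by decide)
    rw [show (({2, 4} : Multiset (Fin 8)).erase 4 + ({4, 5} : Multiset (Fin 8))) = ({2, 4, 5} : Multiset (Fin 8)) from by decide, hx11, hx12] at h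
    exact h
  have hc56 : d8 4 x11 ≤ d8 4 x14 := by
    have h := fnp ({2, 4} : Multiset (Fin 8)) 4 (by decide) ({5, 6} : Multiset (Fin 8)) (by decide)
    rw [show (({2, 4} : Multiset (Fin 8)).erase 4 + ({5, 6} : Multiset (Fin 8))) = ({2, 5, 6} : Multiset (Fin 8)) from by decide, hx11, hx14] at h
    exact h
  have hc57 : d8 2 x12 ≤ d8 2 x16 := by
    have h := fnp ({2, 4, 5} : Multiset (Fin 8)) 2 (by decide) ({3} : Multiset (Fin 8)) (by decide)
    rw [show (({2, 4, 5} : Multiset (Fin 8)).erase 2 + ({3} : Multiset (Fin 8))) = ({3, 4, 5} : Multiset (Fin 8)) from by decide, hx12, hx16] at h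
    exact h
  have hc58 : d8 4 x12 ≤ d8 4 x14 := by
    have h := fnp ({2, 4, 5} : Multiset (Fin 8)) 4 (by decide) ({6} : Multiset (Fin 8)) (by decide)
    rw [show (({2, 4, 5} : Multiset (Fin 8)).erase 4 + ({6} : Multiset (Fin 8))) = ({2, 5, 6} : Multiset (Fin 8)) from by decide, hx12, hx14] at h
    exact h
  have hc59 : d8 2 x13 ≤ d8 2 x1 := by
    have h := fnp ({2, 5} : Multiset (Fin 8)) 2 (by decide) ({1, 2} : Multiset (Fin 8)) (by decide)
    rw [show (({2, 5} : Multiset (Fin 8)).erase 2 + ({1, 2} : Multiset (Fin 8))) = ({1, 2, 5} : Multiset (Fin 8)) from by decide, hx13, hx1] at h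
    exact h
  have hc60 : d8 2 x13 ≤ d8 2 x10 := by
    have h := fnp ({2, 5} : Multiset (Fin 8)) 2 (by decide) ({2, 3} : Multiset (Fin 8)) (by decide)
    rw [show (({2, 5} : Multiset (Fin 8)).erase 2 + ({2, 3} : Multiset (Fin 8))) = ({2, 3, 5} : Multiset (Fin 8)) from by decide, hx13, hx10] at h
    exact h
  have hc61 : d8 2 x13 ≤ d8 2 x12 := by
    have h := fnp ({2, 5} : Multiset (Fin 8)) 2 (by decide) ({2, 4} : Multiset (Fin 8)) (by decide)
    rw [show (({2, 5} : Multiset (Fin 8)).erase 2 + ({2, 4} : Multiset (Fin 8))) = ({2, 4, 5} : Multiset (Fin 8)) from by decide, hx13, hx12] at h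
    exact h
  have hc62 : d8 2 x13 ≤ d8 2 x14 := by
    have h := fnp ({2, 5} : Multiset (Fin 8)) 2 (by decide) ({2, 6} : Multiset (Fin 8)) (by decide)
    rw [show (({2, 5} : Multiset (Fin 8)).erase 2 + ({2, 6} : Multiset (Fin 8))) = ({2, 5, 6} : Multiset (Fin 8)) from by decide, hx13, hx14] at h
    exact h
  have hc63 : d8 2 x13 ≤ d8 2 x16 := by
    have h := fnp ({2, 5} : Multiset (Fin 8)) 2 (by decide) ({3, 4} : Multiset (Fin 8)) (by decide)
    rw [show (({2, 5} : Multiset (Fin 8)).erase 2 + ({3, 4} : Multiset (Fin 8))) = ({3, 4, 5} : Multiset (Fin 8)) from by decide, hx13, hx16] at h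
    exact h
  have hc64 : d8 2 x13 ≤ d8 2 x18 := by
    have h := fnp ({2, 5} : Multiset (Fin 8)) 2 (by decide) ({3} : Multiset (Fin 8)) (by decide)
    rw [show (({2, 5} : Multiset (Fin 8)).erase 2 + ({3} : Multiset (Fin 8))) = ({3, 5} : Multiset (Fin 8)) from by decide, hx13, hx18] at h
    exact h
  have hc65 : d8 2 x13 ≤ d8 2 x19 := by
    have h := fnp ({2, 5} : Multiset (Fin 8)) 2 (by decide) ({3, 6} : Multiset (Fin 8)) (by decide)
    rw [show (({2, 5} : Multiset (Fin 8)).erase 2 + ({3, 6} : Multiset (Fin 8))) = ({3, 5, 6} : Multiset (Fin 8)) from by decide, hx13, hx19] at h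
    exact h
  have hc66 : d8 2 x13 ≤ d8 2 x23 := by
    have h := fnp ({2, 5} : Multiset (Fin 8)) 2 (by decide) ({6} : Multiset (Fin 8)) (by decide)
    rw [show (({2, 5} : Multiset (Fin 8)).erase 2 + ({6} : Multiset (Fin 8))) = ({5, 6} : Multiset (Fin 8)) from by decide, hx13, hx23] at h
    exact h
  have hc67 : d8 5 x13 ≤ d8 5 x1 := by
    have h := fnp ({2, 5} : Multiset (Fin 8)) 5 (by decide) ({1, 5} : Multiset (Fin 8)) (by decide)
    rw [show (({2, 5} : Multiset (Fin 8)).erase 5 + ({1, 5} : Multiset (Fin 8))) = ({1, 2, 5} : Multiset (Fin 8)) from by decide, hx13, hx1] at h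
    exact h
  have hc68 : d8 5 x13 ≤ d8 5 x2 := by
    have h := fnp ({2, 5} : Multiset (Fin 8)) 5 (by decide) ({1, 6} : Multiset (Fin 8)) (by decide)
    rw [show (({2, 5} : Multiset (Fin 8)).erase 5 + ({1, 6} : Multiset (Fin 8))) = ({1, 2, 6} : Multiset (Fin 8)) from by decide, hx13, hx2] at h
    exact h
  have hc69 : d8 5 x13 ≤ d8 5 x10 := by
    have h := fnp ({2, 5} : Multiset (Fin 8)) 5 (by decide) ({3, 5} : Multiset (Fin 8)) (by decide)
    rw [show (({2, 5} : Multiset (Fin 8)).erase 5 + ({3, 5} : Multiset (Fin 8))) = ({2, 3, 5} : Multiset (Fin 8)) from by decide, hx13, hx10] at h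
    exact h
  have hc70 : d8 5 x13 ≤ d8 5 x11 := by
    have h := fnp ({2, 5} : Multiset (Fin 8)) 5 (by decide) ({4} : Multiset (Fin 8)) (by decide)
    rw [show (({2, 5} : Multiset (Fin 8)).erase 5 + ({4} : Multiset (Fin 8))) = ({2, 4} : Multiset (Fin 8)) from by decide, hx13, hx11] at h
    exact h
  have hc71 : d8 5 x13 ≤ d8 5 x12 := by
    have h := fnp ({2, 5} : Multiset (Fin 8)) 5 (by decide) ({4, 5} : Multiset (Fin 8)) (by decide)
    rw [show (({2, 5} : Multiset (Fin 8)).erase 5 + ({4, 5} : Multiset (Fin 8))) = ({2, 4, 5} : Multiset (Fin 8)) from by decide, hx13, hx12] at h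
    exact h
  have hc72 : d8 5 x13 ≤ d8 5 x14 := by
    have h := fnp ({2, 5} : Multiset (Fin 8)) 5 (by decide) ({5, 6} : Multiset (Fin 8)) (by decide)
    rw [show (({2, 5} : Multiset (Fin 8)).erase 5 + ({5, 6} : Multiset (Fin 8))) = ({2, 5, 6} : Multiset (Fin 8)) from by decide, hx13, hx14] at h
    exact h
  have hc73 : d8 2 x14 ≤ d8 2 x7 := by
    have h := fnp ({2, 5, 6} : Multiset (Fin 8)) 2 (by decide) ({1} : Multiset (Fin 8)) (by decide)
    rw [show (({2, 5, 6} : Multiset (Fin 8)).erase 2 + ({1} : Multiset (Fin 8))) = ({1, 5, 6} : Multiset (Fin 8)) from by decide, hx14, hx7] at h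
    exact h
  have hc74 : d8 5 x14 ≤ d8 5 x2 := by
    have h := fnp ({2, 5, 6} : Multiset (Fin 8)) 5 (by decide) ({1} : Multiset (Fin 8)) (by decide)
    rw [show (({2, 5, 6} : Multiset (Fin 8)).erase 5 + ({1} : Multiset (Fin 8))) = ({1, 2, 6} : Multiset (Fin 8)) from by decide, hx14, hx2] at h
    exact h
  have hc75 : d8 3 x15 ≤ d8 3 x21 := by
    have h := fnp ({3, 4, 4} : Multiset (Fin 8)) 3 (by decide) ({7} : Multiset (Fin 8)) (by decide)
    rw [show (({3, 4, 4} : Multiset (Fin 8)).erase 3 + ({7} : Multiset (Fin 8))) = ({4, 4, 7} : Multiset (Fin 8)) from by decide, hx15, hx21] at h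
    exact h
  have hc76 : d8 4 x15 ≤ d8 4 x3 := by
    have h := fnp ({3, 4, 4} : Multiset (Fin 8)) 4 (by decide) ({1} : Multiset (Fin 8)) (by decide)
    rw [show (({3, 4, 4} : Multiset (Fin 8)).erase 4 + ({1} : Multiset (Fin 8))) = ({1, 3, 4} : Multiset (Fin 8)) from by decide, hx15, hx3] at h
    exact h
  have hc77 : d8 4 x15 ≤ d8 4 x9 := by
    have h := fnp ({3, 4, 4} : Multiset (Fin 8)) 4 (by decide) ({2} : Multiset (Fin 8)) (by decide)
    rw [show (({3, 4, 4} : Multiset (Fin 8)).erase 4 + ({2} : Multiset (Fin 8))) = ({2, 3, 4} : Multiset (Fin 8)) from by decide, hx15, hx9] at h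
    exact h
  have hc78 : d8 4 x15 ≤ d8 4 x16 := by
    have h := fnp ({3, 4, 4} : Multiset (Fin 8)) 4 (by decide) ({5} : Multiset (Fin 8)) (by decide)
    rw [show (({3, 4, 4} : Multiset (Fin 8)).erase 4 + ({5} : Multiset (Fin 8))) = ({3, 4, 5} : Multiset (Fin 8)) from by decide, hx15, hx16] at h
    exact h
  have hc79 : d8 3 x16 ≤ d8 3 x12 := by
    have h := fnp ({3, 4, 5} : Multiset (Fin 8)) 3 (by decide) ({2} : Multiset (Fin 8)) (by decide)
    rw [show (({3, 4, 5} : Multiset (Fin 8)).erase 3 + ({2} : Multiset (Fin 8))) = ({2, 4, 5} : Multiset (Fin 8)) from by decide, hx16, hx12] at h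
    exact h
  have hc80 : d8 4 x16 ≤ d8 4 x19 := by
    have h := fnp ({3, 4, 5} : Multiset (Fin 8)) 4 (by decide) ({6} : Multiset (Fin 8)) (by decide)
    rw [show (({3, 4, 5} : Multiset (Fin 8)).erase 4 + ({6} : Multiset (Fin 8))) = ({3, 5, 6} : Multiset (Fin 8)) from by decide, hx16, hx19] at h
    exact h
  have hc81 : d8 3 x17 ≤ d8 3 x6 := by
    have h := fnp ({3, 4, 6} : Multiset (Fin 8)) 3 (by decide) ({1} : Multiset (Fin 8)) (by decide)
    rw [show (({3, 4, 6} : Multiset (Fin 8)).erase 3 + ({1} : Multiset (Fin 8))) = ({1, 4, 6} : Multiset (Fin 8)) from by decide, hx17, hx6] at h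
    exact h
  have hc82 : d8 4 x17 ≤ d8 4 x4 := by
    have h := fnp ({3, 4, 6} : Multiset (Fin 8)) 4 (by decide) ({1} : Multiset (Fin 8)) (by decide)
    rw [show (({3, 4, 6} : Multiset (Fin 8)).erase 4 + ({1} : Multiset (Fin 8))) = ({1, 3, 6} : Multiset (Fin 8)) from by decide, hx17, hx4] at h
    exact h
  have hc83 : d8 4 x17 ≤ d8 4 x19 := by
    have h := fnp ({3, 4, 6} : Multiset (Fin 8)) 4 (by decide) ({5} : Multiset (Fin 8)) (by decide)
    rw [show (({3, 4, 6} : Multiset (Fin 8)).erase 4 + ({5} : Multiset (Fin 8))) = ({3, 5, 6} : Multiset (Fin 8)) from by decide, hx17, hx19] at h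
    exact h
  have hc84 : d8 6 x17 ≤ d8 6 x9 := by
    have h := fnp ({3, 4, 6} : Multiset (Fin 8)) 6 (by decide) ({2} : Multiset (Fin 8)) (by decide)
    rw [show (({3, 4, 6} : Multiset (Fin 8)).erase 6 + ({2} : Multiset (Fin 8))) = ({2, 3, 4} : Multiset (Fin 8)) from by decide, hx17, hx9] at h
    exact h
  have hc85 : d8 3 x18 ≤ d8 3 x10 := by
    have h := fnp ({3, 5} : Multiset (Fin 8)) 3 (by decide) ({2, 3} : Multiset (Fin 8)) (by decide)
    rw [show (({3, 5} : Multiset (Fin 8)).erase 3 + ({2, 3} : Multiset (Fin 8))) = ({2, 3, 5} : Multiset (Fin 8)) from by decide, hx18, hx10] at h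
    exact h
  have hc86 : d8 5 x18 ≤ d8 5 x3 := by
    have h := fnp ({3, 5} : Multiset (Fin 8)) 5 (by decide) ({1, 4} : Multiset (Fin 8)) (by decide)
    rw [show (({3, 5} : Multiset (Fin 8)).erase 5 + ({1, 4} : Multiset (Fin 8))) = ({1, 3, 4} : Multiset (Fin 8)) from by decide, hx18, hx3] at h
    exact h
  have hc87 : d8 5 x18 ≤ d8 5 x15 := by
    have h := fnp ({3, 5} : Multiset (Fin 8)) 5 (by decide) ({4, 4} : Multiset (Fin 8)) (by decide)
    rw [show (({3, 5} : Multiset (Fin 8)).erase 5 + ({4, 4} : Multiset (Fin 8))) = ({3, 4, 4} : Multiset (Fin 8)) from by decide, hx18, hx15] at h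
    exact h
  have hc88 : d8 5 x18 ≤ d8 5 x16 := by
    have h := fnp ({3, 5} : Multiset (Fin 8)) 5 (by decide) ({4, 5} : Multiset (Fin 8)) (by decide)
    rw [show (({3, 5} : Multiset (Fin 8)).erase 5 + ({4, 5} : Multiset (Fin 8))) = ({3, 4, 5} : Multiset (Fin 8)) from by decide, hx18, hx16] at h
    exact h
  have hc89 : d8 5 x18 ≤ d8 5 x17 := by
    have h := fnp ({3, 5} : Multiset (Fin 8)) 5 (by decide) ({4, 6} : Multiset (Fin 8)) (by decide)
    rw [show (({3, 5} : Multiset (Fin 8)).erase 5 + ({4, 6} : Multiset (Fin 8))) = ({3, 4, 6} : Multiset (Fin 8)) from by decide, hx18, hx17] at h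
    exact h
  have hc90 : d8 5 x18 ≤ d8 5 x19 := by
    have h := fnp ({3, 5} : Multiset (Fin 8)) 5 (by decide) ({5, 6} : Multiset (Fin 8)) (by decide)
    rw [show (({3, 5} : Multiset (Fin 8)).erase 5 + ({5, 6} : Multiset (Fin 8))) = ({3, 5, 6} : Multiset (Fin 8)) from by decide, hx18, hx19] at h
    exact h
  have hc91 : d8 5 x19 ≤ d8 5 x4 := by
    have h := fnp ({3, 5, 6} : Multiset (Fin 8)) 5 (by decide) ({1} : Multiset (Fin 8)) (by decide)
    rw [show (({3, 5, 6} : Multiset (Fin 8)).erase 5 + ({1} : Multiset (Fin 8))) = ({1, 3, 6} : Multiset (Fin 8)) from by decide, hx19, hx4] at h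
    exact h
  have hc92 : d8 3 x20 ≤ d8 3 x2 := by
    have h := fnp ({3, 6} : Multiset (Fin 8)) 3 (by decide) ({1, 2} : Multiset (Fin 8)) (by decide)
    rw [show (({3, 6} : Multiset (Fin 8)).erase 3 + ({1, 2} : Multiset (Fin 8))) = ({1, 2, 6} : Multiset (Fin 8)) from by decide, hx20, hx2] at h
    exact h
  have hc93 : d8 3 x20 ≤ d8 3 x4 := by
    have h := fnp ({3, 6} : Multiset (Fin 8)) 3 (by decide) ({1, 3} : Multiset (Fin 8)) (by decide)
    rw [show (({3, 6} : Multiset (Fin 8)).erase 3 + ({1, 3} : Multiset (Fin 8))) = ({1, 3, 6} : Multiset (Fin 8)) from by decide, hx20, hx4] at h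
    exact h
  have hc94 : d8 6 x20 ≤ d8 6 x9 := by
    have h := fnp ({3, 6} : Multiset (Fin 8)) 6 (by decide) ({2, 4} : Multiset (Fin 8)) (by decide)
    rw [show (({3, 6} : Multiset (Fin 8)).erase 6 + ({2, 4} : Multiset (Fin 8))) = ({2, 3, 4} : Multiset (Fin 8)) from by decide, hx20, hx9] at h
    exact h
  have hc95 : d8 6 x20 ≤ d8 6 x15 := by
    have h := fnp ({3, 6} : Multiset (Fin 8)) 6 (by decide) ({4, 4} : Multiset (Fin 8)) (by decide)
    rw [show (({3, 6} : Multiset (Fin 8)).erase 6 + ({4, 4} : Multiset (Fin 8))) = ({3, 4, 4} : Multiset (Fin 8)) from by decide, hx20, hx15] at h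
    exact h
  have hc96 : d8 6 x20 ≤ d8 6 x17 := by
    have h := fnp ({3, 6} : Multiset (Fin 8)) 6 (by decide) ({4, 6} : Multiset (Fin 8)) (by decide)
    rw [show (({3, 6} : Multiset (Fin 8)).erase 6 + ({4, 6} : Multiset (Fin 8))) = ({3, 4, 6} : Multiset (Fin 8)) from by decide, hx20, hx17] at h
    exact h
  have hc97 : d8 6 x20 ≤ d8 6 x19 := by
    have h := fnp ({3, 6} : Multiset (Fin 8)) 6 (by decide) ({5, 6} : Multiset (Fin 8)) (by decide)
    rw [show (({3, 6} : Multiset (Fin 8)).erase 6 + ({5, 6} : Multiset (Fin 8))) = ({3, 5, 6} : Multiset (Fin 8)) from by decide, hx20, hx19] at h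
    exact h
  have hc98 : d8 4 x22 ≤ d8 4 x21 := by
    have h := fnp ({4, 7} : Multiset (Fin 8)) 4 (by decide) ({4, 4} : Multiset (Fin 8)) (by decide)
    rw [show (({4, 7} : Multiset (Fin 8)).erase 4 + ({4, 4} : Multiset (Fin 8))) = ({4, 4, 7} : Multiset (Fin 8)) from by decide, hx22, hx21] at h
    exact h
  have hc99 : d8 7 x22 ≤ d8 7 x16 := by
    have h := fnp ({4, 7} : Multiset (Fin 8)) 7 (by decide) ({3, 5} : Multiset (Fin 8)) (by decide)
    rw [show (({4, 7} : Multiset (Fin 8)).erase 7 + ({3, 5} : Multiset (Fin 8))) = ({3, 4, 5} : Multiset (Fin 8)) from by decide, hx22, hx16] at h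
    exact h
  have hc100 : d8 7 x22 ≤ d8 7 x17 := by
    have h := fnp ({4, 7} : Multiset (Fin 8)) 7 (by decide) ({3, 6} : Multiset (Fin 8)) (by decide)
    rw [show (({4, 7} : Multiset (Fin 8)).erase 7 + ({3, 6} : Multiset (Fin 8))) = ({3, 4, 6} : Multiset (Fin 8)) from by decide, hx22, hx17] at h
    exact h
  have hc101 : d8 5 x23 ≤ d8 5 x7 := by
    have h := fnp ({5, 6} : Multiset (Fin 8)) 5 (by decide) ({1, 5} : Multiset (Fin 8)) (by decide)
    rw [show (({5, 6} : Multiset (Fin 8)).erase 5 + ({1, 5} : Multiset (Fin 8))) = ({1, 5, 6} : Multiset (Fin 8)) from by decide, hx23, hx7] at h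
    exact h
  have hc102 : d8 5 x23 ≤ d8 5 x17 := by
    have h := fnp ({5, 6} : Multiset (Fin 8)) 5 (by decide) ({3, 4} : Multiset (Fin 8)) (by decide)
    rw [show (({5, 6} : Multiset (Fin 8)).erase 5 + ({3, 4} : Multiset (Fin 8))) = ({3, 4, 6} : Multiset (Fin 8)) from by decide, hx23, hx17] at h
    exact h
  have hc103 : d8 5 x23 ≤ d8 5 x19 := by
    have h := fnp ({5, 6} : Multiset (Fin 8)) 5 (by decide) ({3, 5} : Multiset (Fin 8)) (by decide)
    rw [show (({5, 6} : Multiset (Fin 8)).erase 5 + ({3, 5} : Multiset (Fin 8))) = ({3, 5, 6} : Multiset (Fin 8)) from by decide, hx23, hx19] at h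
    exact h
  have hc104 : d8 5 x23 ≤ d8 5 x20 := by
    have h := fnp ({5, 6} : Multiset (Fin 8)) 5 (by decide) ({3} : Multiset (Fin 8)) (by decide)
    rw [show (({5, 6} : Multiset (Fin 8)).erase 5 + ({3} : Multiset (Fin 8))) = ({3, 6} : Multiset (Fin 8)) from by decide, hx23, hx20] at h
    exact h
  have hc105 : d8 6 x23 ≤ d8 6 x10 := by
    have h := fnp ({5, 6} : Multiset (Fin 8)) 6 (by decide) ({2, 3} : Multiset (Fin 8)) (by decide)
    rw [show (({5, 6} : Multiset (Fin 8)).erase 6 + ({2, 3} : Multiset (Fin 8))) = ({2, 3, 5} : Multiset (Fin 8)) from by decide, hx23, hx10] at h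
    exact h
  have hc106 : d8 6 x23 ≤ d8 6 x12 := by
    have h := fnp ({5, 6} : Multiset (Fin 8)) 6 (by decide) ({2, 4} : Multiset (Fin 8)) (by decide)
    rw [show (({5, 6} : Multiset (Fin 8)).erase 6 + ({2, 4} : Multiset (Fin 8))) = ({2, 4, 5} : Multiset (Fin 8)) from by decide, hx23, hx12] at h
    exact h
  have hc107 : d8 6 x23 ≤ d8 6 x14 := by
    have h := fnp ({5, 6} : Multiset (Fin 8)) 6 (by decide) ({2, 6} : Multiset (Fin 8)) (by decide)
    rw [show (({5, 6} : Multiset (Fin 8)).erase 6 + ({2, 6} : Multiset (Fin 8))) = ({2, 5, 6} : Multiset (Fin 8)) from by decide, hx23, hx14] at h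
    exact h
  have hc108 : d8 6 x23 ≤ d8 6 x19 := by
    have h := fnp ({5, 6} : Multiset (Fin 8)) 6 (by decide) ({3, 6} : Multiset (Fin 8)) (by decide)
    rw [show (({5, 6} : Multiset (Fin 8)).erase 6 + ({3, 6} : Multiset (Fin 8))) = ({3, 5, 6} : Multiset (Fin 8)) from by decide, hx23, hx19] at h
    exact h
  rcases FNP12.mem4 hm0 with he1 | he1 | he1 | he1
  · -- x0 = 0
    have hb2 : x0 ∈ ({0} : Finset (Fin 8)) := by rw [he1]; decide
    have hs3 : x11 ∈ ({0, 4, 6} : Finset (Fin 8)) := pruneL (by decide) hm11 hb2 hc53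
    have hs4 : x2 ∈ ({0, 2, 3, 6} : Finset (Fin 8)) := pruneR (by decide) hb2 hm2 hc1
    have hs5 : x15 ∈ ({0, 1, 3, 4, 5, 6, 7} : Finset (Fin 8)) := pruneR (by decide) hs3 hm15 hc51
    have hs6 : x13 ∈ ({0, 1, 3, 4, 5, 6, 7} : Finset (Fin 8)) := pruneL (by decide) hm13 hs3 hc70
    have hs7 : x14 ∈ ({4, 5, 6, 7} : Finset (Fin 8)) := pruneR (by decide) hs6 hm14 hc62
    have hs8 : x2 ∈ ({0, 3, 6} : Finset (Fin 8)) := pruneR (by decide) hb2 hs4 hc7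
    have hs9 : x1 ∈ ({0, 2, 3, 5} : Finset (Fin 8)) := pruneR (by decide) hb2 hm1 hc0
    have hs10 : x10 ∈ ({2, 3, 5, 7} : Finset (Fin 8)) := pruneR (by decide) hs9 hm10 hc13
    have hs11 : x9 ∈ ({0, 3, 4, 6} : Finset (Fin 8)) := pruneR (by decide) hs3 hm9 hc50
    have hs12 : x8 ∈ ({0, 2, 3, 4, 5, 6, 7} : Finset (Fin 8)) := pruneL (by decide) hm8 hs8 hc38
    have hs13 : x4 ∈ ({2, 3, 6, 7} : Finset (Fin 8)) := pruneR (by decide) hs12 hm4 hc32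
    have hs14 : x12 ∈ ({0, 4, 5, 6} : Finset (Fin 8)) := pruneR (by decide) hs6 hm12 hc61
    have hs15 : x7 ∈ ({4, 5, 6, 7} : Finset (Fin 8)) := pruneR (by decide) hs12 hm7 hc34
    have hs16 : x1 ∈ ({0, 3, 5} : Finset (Fin 8)) := pruneR (by decide) hs6 hs9 hc59
    have hs17 : x4 ∈ ({3, 6, 7} : Finset (Fin 8)) := pruneR (by decide) hb2 hs13 hc9
    have hs18 : x17 ∈ ({3, 4, 6, 7} : Finset (Fin 8)) := pruneR (by decide) hs11 hm17 hc44
    have hs19 : x13 ∈ ({0, 3, 4, 5, 6, 7} : Finset (Fin 8)) := pruneR (by decide) hb2 hs6 hc5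
    have hs20 : x5 ∈ ({0, 4, 5} : Finset (Fin 8)) := pruneL (by decide) hm5 hb2 hc26
    have hs21 : x8 ∈ ({0, 3, 4, 5, 6, 7} : Finset (Fin 8)) := pruneR (by decide) hb2 hs12 hc12
    have hs22 : x10 ∈ ({3, 5, 7} : Finset (Fin 8)) := pruneR (by decide) hs19 hs10 hc60
    have hs23 : x15 ∈ ({0, 3, 4, 5, 6, 7} : Finset (Fin 8)) := pruneR (by decide) hs20 hs5 hc24
    have hs24 : x6 ∈ ({0, 4, 5, 6} : Finset (Fin 8)) := pruneR (by decide) hs21 hm6 hc33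
    have hs25 : x3 ∈ ({0, 3, 4, 5} : Finset (Fin 8)) := pruneR (by decide) hs20 hm3 hc22
    have hs26 : x16 ∈ ({3, 4, 5, 7} : Finset (Fin 8)) := pruneR (by decide) hs20 hm16 hc25
    rcases FNP12.mem3 hs16 with he27 | he27 | he27
    · -- x1 = 0
      have hb28 : x1 ∈ ({0} : Finset (Fin 8)) := by rw [he27]; decide
      have hs29 : x13 ∈ ({0, 3, 6} : Finset (Fin 8)) := pruneL (by decide) hs19 hb28 hc59
      have hs30 : x11 ∈ ({0, 6} : Finset (Fin 8)) := pruneR (by decide) hs29 hs3 hc70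
      have hs31 : x14 ∈ ({5, 6, 7} : Finset (Fin 8)) := pruneR (by decide) hs30 hs7 hc56
      have hs32 : x14 ∈ ({6} : Finset (Fin 8)) := pruneR (by decide) hs29 hs31 hc72
      have hs33 : x9 ∈ ({0, 3, 6} : Finset (Fin 8)) := pruneR (by decide) hs30 hs11 hc54
      have hs34 : x23 ∈ ({6} : Finset (Fin 8)) := pruneL (by decide) hm23 hs32 hc107
      have hs35 : x7 ∈ ({6} : Finset (Fin 8)) := pruneR (by decide) hs34 hs15 hc101
      have hs36 : x6 ∈ ({0, 6} : Finset (Fin 8)) := pruneR (by decide) hs35 hs24 hc30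
      have hs37 : x3 ∈ ({0, 3, 5} : Finset (Fin 8)) := pruneL (by decide) hs25 hs36 hc18
      have hs38 : x19 ∈ ({3, 6} : Finset (Fin 8)) := pruneR (by decide) hs34 hm19 hc103
      have hs39 : x20 ∈ ({2, 3, 6} : Finset (Fin 8)) := pruneR (by decide) hs34 hm20 hc104
      have hs40 : x19 ∈ ({6} : Finset (Fin 8)) := pruneR (by decide) hs35 hs38 hc29
      have hs41 : x12 ∈ ({0, 5, 6} : Finset (Fin 8)) := pruneR (by decide) hs30 hs14 hc55
      have hs42 : x4 ∈ ({3, 6} : Finset (Fin 8)) := pruneR (by decide) hs40 hs17 hc91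
      have hs43 : x12 ∈ ({0, 6} : Finset (Fin 8)) := pruneR (by decide) hs29 hs41 hc71
      have hs44 : x5 ∈ ({0, 5} : Finset (Fin 8)) := pruneL (by decide) hs20 hs37 hc22
      have hs45 : x16 ∈ ({3, 5, 7} : Finset (Fin 8)) := pruneL (by decide) hs26 hs43 hc79
      have hs46 : x22 ∈ ({5, 6, 7} : Finset (Fin 8)) := pruneL (by decide) hm22 hs45 hc99
      have hs47 : x16 ∈ ({5} : Finset (Fin 8)) := pruneL (by decide) hs45 hs40 hc80
      have hs48 : x15 ∈ ({0, 4, 5, 6} : Finset (Fin 8)) := pruneL (by decide) hs23 hs47 hc78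
      have hs49 : x8 ∈ ({6} : Finset (Fin 8)) := pruneL (by decide) hs21 hs35 hc43
      have hs50 : x10 ∈ ({3} : Finset (Fin 8)) := pruneR (by decide) hs29 hs22 hc69
      have hs51 : x17 ∈ ({3, 6} : Finset (Fin 8)) := pruneR (by decide) hs34 hs18 hc102
      have hs52 : x6 ∈ ({6} : Finset (Fin 8)) := pruneR (by decide) hs49 hs36 hc33
      have hs53 : x4 ∈ ({6} : Finset (Fin 8)) := pruneR (by decide) hs49 hs42 hc32
      have hs54 : x18 ∈ ({5} : Finset (Fin 8)) := pruneL (by decide) hm18 hs47 hc88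
      have hs55 : x21 ∈ ({5, 6, 7} : Finset (Fin 8)) := pruneR (by decide) hs46 hm21 hc98
      have hs56 : x17 ∈ ({6} : Finset (Fin 8)) := pruneL (by decide) hs51 hs53 hc82
      have hs57 : x3 ∈ ({0, 5} : Finset (Fin 8)) := pruneL (by decide) hs37 hs53 hc19
      have hs58 : x2 ∈ ({6} : Finset (Fin 8)) := pruneR (by decide) hs49 hs8 hc31
      have hs59 : x20 ∈ ({6} : Finset (Fin 8)) := pruneR (by decide) hs49 hs39 hc36
      exact Finset.notMem_empty _ (pruneL (by decide) hs54 hs50 hc85)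
    · -- x1 = 3
      have hb61 : x1 ∈ ({3} : Finset (Fin 8)) := by rw [he27]; decide
      have hs62 : x10 ∈ ({3} : Finset (Fin 8)) := pruneL (by decide) hs22 hb61 hc47
      have hs63 : x18 ∈ ({3} : Finset (Fin 8)) := pruneL (by decide) hm18 hs62 hc85
      have hs64 : x13 ∈ ({0, 3, 6} : Finset (Fin 8)) := pruneL (by decide) hs19 hs62 hc60
      have hs65 : x9 ∈ ({0, 3, 6} : Finset (Fin 8)) := pruneR (by decide) hs62 hs11 hc49
      have hs66 : x11 ∈ ({0, 6} : Finset (Fin 8)) := pruneR (by decide) hs64 hs3 hc70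
      have hs67 : x14 ∈ ({5, 6, 7} : Finset (Fin 8)) := pruneR (by decide) hs66 hs7 hc56
      have hs68 : x14 ∈ ({6} : Finset (Fin 8)) := pruneR (by decide) hs64 hs67 hc72
      have hs69 : x23 ∈ ({6} : Finset (Fin 8)) := pruneL (by decide) hm23 hs68 hc107
      have hs70 : x17 ∈ ({3, 6} : Finset (Fin 8)) := pruneR (by decide) hs63 hs18 hc89
      have hs71 : x7 ∈ ({6} : Finset (Fin 8)) := pruneR (by decide) hs69 hs15 hc101
      have hs72 : x6 ∈ ({0, 6} : Finset (Fin 8)) := pruneR (by decide) hs71 hs24 hc30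
      have hs73 : x3 ∈ ({0, 3, 5} : Finset (Fin 8)) := pruneL (by decide) hs25 hs72 hc18
      have hs74 : x19 ∈ ({3, 6} : Finset (Fin 8)) := pruneR (by decide) hs69 hm19 hc103
      have hs75 : x20 ∈ ({2, 3, 6} : Finset (Fin 8)) := pruneR (by decide) hs69 hm20 hc104
      have hs76 : x3 ∈ ({0, 3} : Finset (Fin 8)) := pruneR (by decide) hs63 hs73 hc86
      have hs77 : x16 ∈ ({3} : Finset (Fin 8)) := pruneR (by decide) hs63 hs26 hc88
      have hs78 : x12 ∈ ({0, 5, 6} : Finset (Fin 8)) := pruneR (by decide) hs66 hs14 hc55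
      have hs79 : x19 ∈ ({6} : Finset (Fin 8)) := pruneR (by decide) hs71 hs74 hc29
      have hs80 : x4 ∈ ({3, 6} : Finset (Fin 8)) := pruneR (by decide) hs79 hs17 hc91
      have hs81 : x12 ∈ ({0, 6} : Finset (Fin 8)) := pruneR (by decide) hs64 hs78 hc71
      have hs82 : x5 ∈ ({0, 5} : Finset (Fin 8)) := pruneL (by decide) hs20 hs76 hc22
      have hs83 : x22 ∈ ({5, 6, 7} : Finset (Fin 8)) := pruneL (by decide) hm22 hs77 hc99
      exact Finset.notMem_empty _ (pruneL (by decide) hs77 hs79 hc80)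
    · -- x1 = 5
      have hb85 : x1 ∈ ({5} : Finset (Fin 8)) := by rw [he27]; decide
      have hs86 : x7 ∈ ({5} : Finset (Fin 8)) := pruneR (by decide) hb85 hs15 hc14
      have hs87 : x23 ∈ ({5} : Finset (Fin 8)) := pruneL (by decide) hm23 hs86 hc101
      have hs88 : x13 ∈ ({5} : Finset (Fin 8)) := pruneL (by decide) hs19 hb85 hc67
      have hs89 : x12 ∈ ({0, 5} : Finset (Fin 8)) := pruneR (by decide) hs87 hs14 hc106
      have hs90 : x8 ∈ ({0, 3, 5} : Finset (Fin 8)) := pruneL (by decide) hs21 hs87 hc37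
      have hs91 : x6 ∈ ({0, 5} : Finset (Fin 8)) := pruneR (by decide) hs90 hs24 hc42
      have hs92 : x16 ∈ ({3, 5, 7} : Finset (Fin 8)) := pruneL (by decide) hs26 hs89 hc79
      have hs93 : x22 ∈ ({5, 6, 7} : Finset (Fin 8)) := pruneL (by decide) hm22 hs92 hc99
      have hs94 : x3 ∈ ({0, 3, 5} : Finset (Fin 8)) := pruneL (by decide) hs25 hs91 hc18
      have hs95 : x5 ∈ ({0, 5} : Finset (Fin 8)) := pruneL (by decide) hs20 hs89 hc23
      have hs96 : x19 ∈ ({3, 5} : Finset (Fin 8)) := pruneR (by decide) hs87 hm19 hc108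
      have hs97 : x16 ∈ ({5} : Finset (Fin 8)) := pruneR (by decide) hs88 hs92 hc63
      have hs98 : x12 ∈ ({5} : Finset (Fin 8)) := pruneR (by decide) hs88 hs89 hc61
      have hs99 : x10 ∈ ({3, 5} : Finset (Fin 8)) := pruneR (by decide) hs87 hs22 hc105
      have hs100 : x15 ∈ ({0, 4, 5, 6} : Finset (Fin 8)) := pruneL (by decide) hs23 hs97 hc78
      have hs101 : x4 ∈ ({3} : Finset (Fin 8)) := pruneR (by decide) hs90 hs17 hc40
      have hs102 : x19 ∈ ({5} : Finset (Fin 8)) := pruneR (by decide) hs88 hs96 hc65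
      have hs103 : x10 ∈ ({5} : Finset (Fin 8)) := pruneR (by decide) hs88 hs99 hc60
      have hs104 : x14 ∈ ({4, 5, 6} : Finset (Fin 8)) := pruneR (by decide) hs103 hs7 hc48
      have hs105 : x14 ∈ ({5, 6} : Finset (Fin 8)) := pruneR (by decide) hs98 hs104 hc58
      have hs106 : x18 ∈ ({5} : Finset (Fin 8)) := pruneR (by decide) hs88 hm18 hc64
      have hs107 : x2 ∈ ({0, 3} : Finset (Fin 8)) := pruneR (by decide) hs90 hs8 hc38
      have hs108 : x21 ∈ ({5, 6, 7} : Finset (Fin 8)) := pruneR (by decide) hs93 hm21 hc98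
      have hs109 : x14 ∈ ({5} : Finset (Fin 8)) := pruneR (by decide) hs87 hs105 hc107
      have hs110 : x9 ∈ ({0, 4, 6} : Finset (Fin 8)) := pruneL (by decide) hs11 hs103 hc46
      have hs111 : x9 ∈ ({0, 6} : Finset (Fin 8)) := pruneL (by decide) hs110 hs98 hc45
      have hs112 : x17 ∈ ({3, 6, 7} : Finset (Fin 8)) := pruneL (by decide) hs18 hs91 hc81
      have hs113 : x17 ∈ ({6} : Finset (Fin 8)) := pruneL (by decide) hs112 hs102 hc83
      have hs114 : x15 ∈ ({0, 5, 6} : Finset (Fin 8)) := pruneL (by decide) hs100 hs108 hc75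
      have hs115 : x21 ∈ ({5, 6} : Finset (Fin 8)) := pruneR (by decide) hs114 hs108 hc75
      have hs116 : x20 ∈ ({3} : Finset (Fin 8)) := pruneL (by decide) hm20 hs101 hc93
      have hs117 : x9 ∈ ({0} : Finset (Fin 8)) := pruneR (by decide) hs116 hs111 hc94
      have hs118 : x11 ∈ ({0, 6} : Finset (Fin 8)) := pruneL (by decide) hs3 hs117 hc50
      exact Finset.notMem_empty _ (pruneL (by decide) hs116 hs113 hc96)
  · -- x0 = 1
    have hb120 : x0 ∈ ({1} : Finset (Fin 8)) := by rw [he1]; decide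
    have hs121 : x3 ∈ ({1, 4, 5} : Finset (Fin 8)) := pruneR (by decide) hb120 hm3 hc8
    have hs122 : x4 ∈ ({1, 7} : Finset (Fin 8)) := pruneR (by decide) hb120 hm4 hc9
    have hs123 : x8 ∈ ({0, 1, 2, 3, 4, 5, 7} : Finset (Fin 8)) := pruneL (by decide) hm8 hs122 hc32
    have hs124 : x2 ∈ ({0, 1, 2, 6} : Finset (Fin 8)) := pruneR (by decide) hs122 hm2 hc21
    have hs125 : x2 ∈ ({1} : Finset (Fin 8)) := pruneR (by decide) hb120 hs124 hc7
    have hs126 : x20 ∈ ({2, 3, 7} : Finset (Fin 8)) := pruneL (by decide) hm20 hs125 hc92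
    have hs127 : x19 ∈ ({3, 5, 7} : Finset (Fin 8)) := pruneR (by decide) hs126 hm19 hc97
    have hs128 : x15 ∈ ({0, 1, 2, 3, 4, 5, 7} : Finset (Fin 8)) := pruneR (by decide) hs126 hm15 hc95
    have hs129 : x18 ∈ ({1, 5, 7} : Finset (Fin 8)) := pruneL (by decide) hm18 hs121 hc86
    have hs130 : x17 ∈ ({2, 3, 4, 7} : Finset (Fin 8)) := pruneR (by decide) hs126 hm17 hc96
    have hs131 : x7 ∈ ({1, 4, 5, 7} : Finset (Fin 8)) := pruneL (by decide) hm7 hs127 hc29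
    have hs132 : x19 ∈ ({5, 7} : Finset (Fin 8)) := pruneL (by decide) hs127 hs122 hc91
    have hs133 : x10 ∈ ({1, 2, 5, 7} : Finset (Fin 8)) := pruneR (by decide) hs129 hm10 hc85
    have hs134 : x13 ∈ ({1, 4, 5, 7} : Finset (Fin 8)) := pruneL (by decide) hm13 hs125 hc68
    have hs135 : x12 ∈ ({4, 5} : Finset (Fin 8)) := pruneR (by decide) hs134 hm12 hc61
    have hs136 : x1 ∈ ({1, 5} : Finset (Fin 8)) := pruneR (by decide) hs134 hm1 hc59
    have hs137 : x6 ∈ ({1, 4, 5} : Finset (Fin 8)) := pruneR (by decide) hb120 hm6 hc11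
    have hs138 : x23 ∈ ({4, 5, 7} : Finset (Fin 8)) := pruneR (by decide) hs134 hm23 hc66
    have hs139 : x16 ∈ ({1, 4, 5, 7} : Finset (Fin 8)) := pruneR (by decide) hs135 hm16 hc57
    have hs140 : x14 ∈ ({2, 4, 5, 7} : Finset (Fin 8)) := pruneR (by decide) hs138 hm14 hc107
    have hs141 : x9 ∈ ({0, 2, 3, 4} : Finset (Fin 8)) := pruneR (by decide) hs130 hm9 hc84
    have hs142 : x17 ∈ ({2, 4, 7} : Finset (Fin 8)) := pruneL (by decide) hs130 hs122 hc82
    have hs143 : x9 ∈ ({0, 2, 4} : Finset (Fin 8)) := pruneL (by decide) hs141 hs133 hc46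
    have hs144 : x15 ∈ ({0, 1, 2, 4, 5, 7} : Finset (Fin 8)) := pruneL (by decide) hs128 hs121 hc76
    have hs145 : x5 ∈ ({1, 4, 5} : Finset (Fin 8)) := pruneR (by decide) hb120 hm5 hc10
    have hs146 : x8 ∈ ({1} : Finset (Fin 8)) := pruneL (by decide) hs123 hs125 hc31
    have hs147 : x14 ∈ ({4, 5, 7} : Finset (Fin 8)) := pruneL (by decide) hs140 hs125 hc74
    have hs148 : x10 ∈ ({1, 5, 7} : Finset (Fin 8)) := pruneR (by decide) hs134 hs133 hc60
    have hs149 : x1 ∈ ({1} : Finset (Fin 8)) := pruneR (by decide) hs125 hs136 hc17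
    have hs150 : x3 ∈ ({1} : Finset (Fin 8)) := pruneR (by decide) hs146 hs121 hc39
    have hs151 : x5 ∈ ({1} : Finset (Fin 8)) := pruneR (by decide) hs146 hs145 hc41
    have hs152 : x10 ∈ ({1, 7} : Finset (Fin 8)) := pruneL (by decide) hs148 hs149 hc47
    have hs153 : x20 ∈ ({2, 7} : Finset (Fin 8)) := pruneL (by decide) hs126 hs142 hc96
    have hs154 : x11 ∈ ({0, 4, 6} : Finset (Fin 8)) := pruneL (by decide) hm11 hs135 hc55
    have hs155 : x18 ∈ ({1, 7} : Finset (Fin 8)) := pruneL (by decide) hs129 hs152 hc85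
    have hs156 : x13 ∈ ({1, 4, 7} : Finset (Fin 8)) := pruneL (by decide) hs134 hs149 hc59
    have hs157 : x6 ∈ ({1} : Finset (Fin 8)) := pruneR (by decide) hs146 hs137 hc42
    have hs158 : x15 ∈ ({0, 1, 4, 5, 7} : Finset (Fin 8)) := pruneR (by decide) hs154 hs144 hc51
    have hs159 : x4 ∈ ({1} : Finset (Fin 8)) := pruneR (by decide) hs146 hs122 hc40
    have hs160 : x19 ∈ ({7} : Finset (Fin 8)) := pruneR (by decide) hs155 hs132 hc90
    have hs161 : x15 ∈ ({0, 1, 4, 7} : Finset (Fin 8)) := pruneR (by decide) hs155 hs158 hc87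
    have hs162 : x17 ∈ ({4, 7} : Finset (Fin 8)) := pruneR (by decide) hs154 hs142 hc52
    have hs163 : x7 ∈ ({1, 7} : Finset (Fin 8)) := pruneR (by decide) hs157 hs131 hc28
    have hs164 : x7 ∈ ({1} : Finset (Fin 8)) := pruneR (by decide) hs146 hs163 hc43
    have hs165 : x17 ∈ ({7} : Finset (Fin 8)) := pruneL (by decide) hs162 hs157 hc81
    have hs166 : x22 ∈ ({7} : Finset (Fin 8)) := pruneL (by decide) hm22 hs165 hc100
    have hs167 : x14 ∈ ({4, 7} : Finset (Fin 8)) := pruneL (by decide) hs147 hs164 hc73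
    have hs168 : x9 ∈ ({0, 4} : Finset (Fin 8)) := pruneR (by decide) hs154 hs143 hc50
    have hs169 : x23 ∈ ({4, 7} : Finset (Fin 8)) := pruneL (by decide) hs138 hs160 hc108
    have hs170 : x16 ∈ ({1, 4, 7} : Finset (Fin 8)) := pruneR (by decide) hs155 hs139 hc88
    have hs171 : x12 ∈ ({4} : Finset (Fin 8)) := pruneR (by decide) hs156 hs135 hc71
    have hs172 : x21 ∈ ({7} : Finset (Fin 8)) := pruneR (by decide) hs166 hm21 hc98
    have hs173 : x15 ∈ ({1, 7} : Finset (Fin 8)) := pruneL (by decide) hs161 hs172 hc75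
    have hs174 : x16 ∈ ({1, 7} : Finset (Fin 8)) := pruneR (by decide) hs173 hs170 hc78
    exact Finset.notMem_empty _ (pruneL (by decide) hs173 hs168 hc77)
  · -- x0 = 2
    have hb176 : x0 ∈ ({2} : Finset (Fin 8)) := by rw [he1]; decide
    have hs177 : x2 ∈ ({2, 6} : Finset (Fin 8)) := pruneR (by decide) hb176 hm2 hc1
    have hs178 : x8 ∈ ({2, 4, 6, 7} : Finset (Fin 8)) := pruneL (by decide) hm8 hs177 hc38
    have hs179 : x4 ∈ ({2, 6, 7} : Finset (Fin 8)) := pruneR (by decide) hs178 hm4 hc32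
    have hs180 : x11 ∈ ({2, 4, 6} : Finset (Fin 8)) := pruneR (by decide) hb176 hm11 hc3
    have hs181 : x19 ∈ ({6, 7} : Finset (Fin 8)) := pruneR (by decide) hs179 hm19 hc20
    have hs182 : x12 ∈ ({2, 4, 6} : Finset (Fin 8)) := pruneR (by decide) hb176 hm12 hc4
    have hs183 : x14 ∈ ({2, 4, 6, 7} : Finset (Fin 8)) := pruneR (by decide) hs177 hm14 hc16
    have hs184 : x1 ∈ ({2} : Finset (Fin 8)) := pruneR (by decide) hb176 hm1 hc0
    have hs185 : x6 ∈ ({4, 6} : Finset (Fin 8)) := pruneR (by decide) hs178 hm6 hc33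
    have hs186 : x20 ∈ ({2, 6, 7} : Finset (Fin 8)) := pruneL (by decide) hm20 hs181 hc97
    have hs187 : x10 ∈ ({2, 7} : Finset (Fin 8)) := pruneR (by decide) hs184 hm10 hc13
    have hs188 : x17 ∈ ({2, 4, 6, 7} : Finset (Fin 8)) := pruneL (by decide) hm17 hs181 hc83
    have hs189 : x23 ∈ ({4, 6, 7} : Finset (Fin 8)) := pruneL (by decide) hm23 hs181 hc108
    have hs190 : x18 ∈ ({1, 3, 7} : Finset (Fin 8)) := pruneL (by decide) hm18 hs187 hc85
    have hs191 : x7 ∈ ({4, 6, 7} : Finset (Fin 8)) := pruneR (by decide) hs178 hm7 hc34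
    have hs192 : x13 ∈ ({0, 1, 2, 3, 4, 6, 7} : Finset (Fin 8)) := pruneL (by decide) hm13 hs182 hc61
    have hs193 : x13 ∈ ({2} : Finset (Fin 8)) := pruneL (by decide) hs192 hs184 hc59
    have hs194 : x9 ∈ ({0, 2, 4, 6} : Finset (Fin 8)) := pruneL (by decide) hm9 hs187 hc46
    have hs195 : x16 ∈ ({1, 4, 5, 7} : Finset (Fin 8)) := pruneL (by decide) hm16 hs181 hc80
    have hs196 : x15 ∈ ({0, 1, 2, 4, 5, 6, 7} : Finset (Fin 8)) := pruneL (by decide) hm15 hs195 hc78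
    have hs197 : x15 ∈ ({0, 1, 2, 4, 6, 7} : Finset (Fin 8)) := pruneR (by decide) hs190 hs196 hc87
    have hs198 : x3 ∈ ({0, 1, 4, 5} : Finset (Fin 8)) := pruneL (by decide) hm3 hs179 hc19
    have hs199 : x10 ∈ ({2} : Finset (Fin 8)) := pruneR (by decide) hs193 hs187 hc69
    have hs200 : x2 ∈ ({2} : Finset (Fin 8)) := pruneR (by decide) hs184 hs177 hc15
    have hs201 : x9 ∈ ({2, 4, 6} : Finset (Fin 8)) := pruneR (by decide) hb176 hs194 hc2
    have hs202 : x9 ∈ ({2} : Finset (Fin 8)) := pruneR (by decide) hs199 hs201 hc49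
    have hs203 : x14 ∈ ({2} : Finset (Fin 8)) := pruneR (by decide) hs193 hs183 hc72
    have hs204 : x5 ∈ ({0, 4, 5} : Finset (Fin 8)) := pruneL (by decide) hm5 hs185 hc27
    have hs205 : x4 ∈ ({2, 7} : Finset (Fin 8)) := pruneL (by decide) hs179 hs200 hc21
    have hs206 : x15 ∈ ({0, 2, 4, 6, 7} : Finset (Fin 8)) := pruneR (by decide) hs204 hs197 hc24
    have hs207 : x20 ∈ ({2, 7} : Finset (Fin 8)) := pruneL (by decide) hs186 hs200 hc92
    have hs208 : x19 ∈ ({7} : Finset (Fin 8)) := pruneR (by decide) hs207 hs181 hc97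
    have hs209 : x8 ∈ ({2, 4, 7} : Finset (Fin 8)) := pruneL (by decide) hs178 hs203 hc35
    have hs210 : x15 ∈ ({0, 2, 4, 7} : Finset (Fin 8)) := pruneR (by decide) hs207 hs206 hc95
    have hs211 : x11 ∈ ({2} : Finset (Fin 8)) := pruneR (by decide) hs193 hs180 hc70
    have hs212 : x3 ∈ ({0, 1, 4} : Finset (Fin 8)) := pruneR (by decide) hs190 hs198 hc86
    have hs213 : x17 ∈ ({2, 4, 7} : Finset (Fin 8)) := pruneR (by decide) hs207 hs188 hc96
    have hs214 : x7 ∈ ({4, 7} : Finset (Fin 8)) := pruneL (by decide) hs191 hs208 hc29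
    have hs215 : x18 ∈ ({1, 7} : Finset (Fin 8)) := pruneL (by decide) hs190 hs195 hc88
    have hs216 : x16 ∈ ({1, 4, 7} : Finset (Fin 8)) := pruneR (by decide) hs215 hs195 hc88
    have hs217 : x12 ∈ ({2} : Finset (Fin 8)) := pruneR (by decide) hs211 hs182 hc55
    have hs218 : x23 ∈ ({4, 7} : Finset (Fin 8)) := pruneL (by decide) hs189 hs214 hc101
    have hs219 : x3 ∈ ({0, 4} : Finset (Fin 8)) := pruneR (by decide) hs204 hs212 hc22
    have hs220 : x16 ∈ ({4, 7} : Finset (Fin 8)) := pruneR (by decide) hs204 hs216 hc25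
    have hs221 : x6 ∈ ({4} : Finset (Fin 8)) := pruneR (by decide) hs209 hs185 hc42
    have hs222 : x16 ∈ ({7} : Finset (Fin 8)) := pruneL (by decide) hs220 hs217 hc79
    have hs223 : x22 ∈ ({7} : Finset (Fin 8)) := pruneL (by decide) hm22 hs222 hc99
    have hs224 : x15 ∈ ({0, 4} : Finset (Fin 8)) := pruneL (by decide) hs210 hs219 hc76
    have hs225 : x5 ∈ ({4} : Finset (Fin 8)) := pruneL (by decide) hs204 hs221 hc27
    have hs226 : x15 ∈ ({4} : Finset (Fin 8)) := pruneR (by decide) hs225 hs224 hc24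
    have hs227 : x21 ∈ ({7} : Finset (Fin 8)) := pruneR (by decide) hs223 hm21 hc98
    exact Finset.notMem_empty _ (pruneL (by decide) hs226 hs227 hc75)
  · -- x0 = 3
    have hb229 : x0 ∈ ({3} : Finset (Fin 8)) := by rw [he1]; decide
    have hs230 : x2 ∈ ({0, 2, 3, 6} : Finset (Fin 8)) := pruneR (by decide) hb229 hm2 hc1
    have hs231 : x8 ∈ ({0, 2, 3, 4, 5, 6, 7} : Finset (Fin 8)) := pruneL (by decide) hm8 hs230 hc38
    have hs232 : x4 ∈ ({1, 3, 6, 7} : Finset (Fin 8)) := pruneR (by decide) hb229 hm4 hc9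
    have hs233 : x4 ∈ ({3, 6, 7} : Finset (Fin 8)) := pruneR (by decide) hs231 hs232 hc32
    have hs234 : x1 ∈ ({0, 1, 3, 5} : Finset (Fin 8)) := pruneR (by decide) hb229 hm1 hc6
    have hs235 : x2 ∈ ({0, 3, 6} : Finset (Fin 8)) := pruneR (by decide) hb229 hs230 hc7
    have hs236 : x13 ∈ ({0, 1, 3, 4, 5, 6, 7} : Finset (Fin 8)) := pruneL (by decide) hm13 hs234 hc67
    have hs237 : x1 ∈ ({0, 3, 5} : Finset (Fin 8)) := pruneR (by decide) hb229 hs234 hc0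
    have hs238 : x6 ∈ ({0, 4, 5, 6} : Finset (Fin 8)) := pruneR (by decide) hs231 hm6 hc33
    have hs239 : x10 ∈ ({2, 3, 5, 7} : Finset (Fin 8)) := pruneR (by decide) hs237 hm10 hc13
    have hs240 : x7 ∈ ({4, 5, 6, 7} : Finset (Fin 8)) := pruneR (by decide) hs231 hm7 hc34
    have hs241 : x12 ∈ ({0, 4, 5, 6} : Finset (Fin 8)) := pruneR (by decide) hs236 hm12 hc61
    have hs242 : x13 ∈ ({0, 3, 4, 5, 6, 7} : Finset (Fin 8)) := pruneR (by decide) hb229 hs236 hc5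
    have hs243 : x8 ∈ ({0, 3, 4, 5, 6, 7} : Finset (Fin 8)) := pruneR (by decide) hb229 hs231 hc12
    have hs244 : x14 ∈ ({4, 5, 6, 7} : Finset (Fin 8)) := pruneL (by decide) hm14 hs235 hc74
    have hs245 : x10 ∈ ({3, 5, 7} : Finset (Fin 8)) := pruneR (by decide) hs242 hs239 hc60
    have hs246 : x5 ∈ ({0, 4, 5} : Finset (Fin 8)) := pruneL (by decide) hm5 hs238 hc27
    have hs247 : x15 ∈ ({0, 2, 3, 4, 5, 6, 7} : Finset (Fin 8)) := pruneR (by decide) hs246 hm15 hc24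
    have hs248 : x11 ∈ ({0, 4, 6} : Finset (Fin 8)) := pruneL (by decide) hm11 hs241 hc55
    have hs249 : x3 ∈ ({0, 3, 4, 5} : Finset (Fin 8)) := pruneR (by decide) hs246 hm3 hc22
    have hs250 : x16 ∈ ({3, 4, 5, 7} : Finset (Fin 8)) := pruneR (by decide) hs246 hm16 hc25
    have hs251 : x15 ∈ ({0, 3, 4, 5, 6, 7} : Finset (Fin 8)) := pruneR (by decide) hs248 hs247 hc51
    have hs252 : x17 ∈ ({3, 4, 6, 7} : Finset (Fin 8)) := pruneR (by decide) hs248 hm17 hc52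
    have hs253 : x9 ∈ ({0, 3, 4, 6} : Finset (Fin 8)) := pruneR (by decide) hs248 hm9 hc50
    rcases FNP12.mem3 hs237 with he254 | he254 | he254
    · -- x1 = 0
      have hb255 : x1 ∈ ({0} : Finset (Fin 8)) := by rw [he254]; decide
      have hs256 : x13 ∈ ({0, 3, 6} : Finset (Fin 8)) := pruneL (by decide) hs242 hb255 hc59
      have hs257 : x11 ∈ ({0, 6} : Finset (Fin 8)) := pruneR (by decide) hs256 hs248 hc70
      have hs258 : x14 ∈ ({5, 6, 7} : Finset (Fin 8)) := pruneR (by decide) hs257 hs244 hc56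
      have hs259 : x14 ∈ ({6} : Finset (Fin 8)) := pruneR (by decide) hs256 hs258 hc72
      have hs260 : x9 ∈ ({0, 3, 6} : Finset (Fin 8)) := pruneR (by decide) hs257 hs253 hc54
      have hs261 : x23 ∈ ({6} : Finset (Fin 8)) := pruneL (by decide) hm23 hs259 hc107
      have hs262 : x7 ∈ ({6} : Finset (Fin 8)) := pruneR (by decide) hs261 hs240 hc101
      have hs263 : x6 ∈ ({0, 6} : Finset (Fin 8)) := pruneR (by decide) hs262 hs238 hc30
      have hs264 : x3 ∈ ({0, 3, 5} : Finset (Fin 8)) := pruneL (by decide) hs249 hs263 hc18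
      have hs265 : x19 ∈ ({3, 6} : Finset (Fin 8)) := pruneR (by decide) hs261 hm19 hc103
      have hs266 : x20 ∈ ({2, 3, 6} : Finset (Fin 8)) := pruneR (by decide) hs261 hm20 hc104
      have hs267 : x19 ∈ ({6} : Finset (Fin 8)) := pruneR (by decide) hs262 hs265 hc29
      have hs268 : x12 ∈ ({0, 5, 6} : Finset (Fin 8)) := pruneR (by decide) hs257 hs241 hc55
      have hs269 : x4 ∈ ({3, 6} : Finset (Fin 8)) := pruneR (by decide) hs267 hs233 hc91
      have hs270 : x12 ∈ ({0, 6} : Finset (Fin 8)) := pruneR (by decide) hs256 hs268 hc71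
      have hs271 : x5 ∈ ({0, 5} : Finset (Fin 8)) := pruneL (by decide) hs246 hs264 hc22
      have hs272 : x16 ∈ ({3, 5, 7} : Finset (Fin 8)) := pruneL (by decide) hs250 hs270 hc79
      have hs273 : x22 ∈ ({5, 6, 7} : Finset (Fin 8)) := pruneL (by decide) hm22 hs272 hc99
      have hs274 : x16 ∈ ({5} : Finset (Fin 8)) := pruneL (by decide) hs272 hs267 hc80
      have hs275 : x15 ∈ ({0, 4, 5, 6} : Finset (Fin 8)) := pruneL (by decide) hs251 hs274 hc78
      have hs276 : x8 ∈ ({6} : Finset (Fin 8)) := pruneL (by decide) hs243 hs262 hc43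
      have hs277 : x10 ∈ ({3} : Finset (Fin 8)) := pruneR (by decide) hs256 hs245 hc69
      have hs278 : x17 ∈ ({3, 6} : Finset (Fin 8)) := pruneR (by decide) hs261 hs252 hc102
      have hs279 : x6 ∈ ({6} : Finset (Fin 8)) := pruneR (by decide) hs276 hs263 hc33
      have hs280 : x4 ∈ ({6} : Finset (Fin 8)) := pruneR (by decide) hs276 hs269 hc32
      have hs281 : x18 ∈ ({5} : Finset (Fin 8)) := pruneL (by decide) hm18 hs274 hc88
      have hs282 : x21 ∈ ({5, 6, 7} : Finset (Fin 8)) := pruneR (by decide) hs273 hm21 hc98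
      have hs283 : x17 ∈ ({6} : Finset (Fin 8)) := pruneL (by decide) hs278 hs280 hc82
      have hs284 : x3 ∈ ({0, 5} : Finset (Fin 8)) := pruneL (by decide) hs264 hs280 hc19
      have hs285 : x2 ∈ ({6} : Finset (Fin 8)) := pruneR (by decide) hs276 hs235 hc31
      have hs286 : x20 ∈ ({6} : Finset (Fin 8)) := pruneR (by decide) hs276 hs266 hc36
      exact Finset.notMem_empty _ (pruneL (by decide) hs281 hs277 hc85)
    · -- x1 = 3
      have hb288 : x1 ∈ ({3} : Finset (Fin 8)) := by rw [he254]; decide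
      have hs289 : x10 ∈ ({3} : Finset (Fin 8)) := pruneL (by decide) hs245 hb288 hc47
      have hs290 : x18 ∈ ({3} : Finset (Fin 8)) := pruneL (by decide) hm18 hs289 hc85
      have hs291 : x13 ∈ ({0, 3, 6} : Finset (Fin 8)) := pruneL (by decide) hs242 hs289 hc60
      have hs292 : x9 ∈ ({0, 3, 6} : Finset (Fin 8)) := pruneR (by decide) hs289 hs253 hc49
      have hs293 : x11 ∈ ({0, 6} : Finset (Fin 8)) := pruneR (by decide) hs291 hs248 hc70
      have hs294 : x14 ∈ ({5, 6, 7} : Finset (Fin 8)) := pruneR (by decide) hs293 hs244 hc56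
      have hs295 : x14 ∈ ({6} : Finset (Fin 8)) := pruneR (by decide) hs291 hs294 hc72
      have hs296 : x23 ∈ ({6} : Finset (Fin 8)) := pruneL (by decide) hm23 hs295 hc107
      have hs297 : x17 ∈ ({3, 6} : Finset (Fin 8)) := pruneR (by decide) hs290 hs252 hc89
      have hs298 : x7 ∈ ({6} : Finset (Fin 8)) := pruneR (by decide) hs296 hs240 hc101
      have hs299 : x6 ∈ ({0, 6} : Finset (Fin 8)) := pruneR (by decide) hs298 hs238 hc30
      have hs300 : x3 ∈ ({0, 3, 5} : Finset (Fin 8)) := pruneL (by decide) hs249 hs299 hc18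
      have hs301 : x19 ∈ ({3, 6} : Finset (Fin 8)) := pruneR (by decide) hs296 hm19 hc103
      have hs302 : x20 ∈ ({2, 3, 6} : Finset (Fin 8)) := pruneR (by decide) hs296 hm20 hc104
      have hs303 : x3 ∈ ({0, 3} : Finset (Fin 8)) := pruneR (by decide) hs290 hs300 hc86
      have hs304 : x16 ∈ ({3} : Finset (Fin 8)) := pruneR (by decide) hs290 hs250 hc88
      have hs305 : x12 ∈ ({0, 5, 6} : Finset (Fin 8)) := pruneR (by decide) hs293 hs241 hc55
      have hs306 : x19 ∈ ({6} : Finset (Fin 8)) := pruneR (by decide) hs298 hs301 hc29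
      have hs307 : x4 ∈ ({3, 6} : Finset (Fin 8)) := pruneR (by decide) hs306 hs233 hc91
      have hs308 : x12 ∈ ({0, 6} : Finset (Fin 8)) := pruneR (by decide) hs291 hs305 hc71
      have hs309 : x5 ∈ ({0, 5} : Finset (Fin 8)) := pruneL (by decide) hs246 hs303 hc22
      have hs310 : x22 ∈ ({5, 6, 7} : Finset (Fin 8)) := pruneL (by decide) hm22 hs304 hc99
      exact Finset.notMem_empty _ (pruneL (by decide) hs304 hs306 hc80)
    · -- x1 = 5
      have hb312 : x1 ∈ ({5} : Finset (Fin 8)) := by rw [he254]; decide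
      have hs313 : x7 ∈ ({5} : Finset (Fin 8)) := pruneR (by decide) hb312 hs240 hc14
      have hs314 : x23 ∈ ({5} : Finset (Fin 8)) := pruneL (by decide) hm23 hs313 hc101
      have hs315 : x13 ∈ ({5} : Finset (Fin 8)) := pruneL (by decide) hs242 hb312 hc67
      have hs316 : x12 ∈ ({0, 5} : Finset (Fin 8)) := pruneR (by decide) hs314 hs241 hc106
      have hs317 : x8 ∈ ({0, 3, 5} : Finset (Fin 8)) := pruneL (by decide) hs243 hs314 hc37
      have hs318 : x6 ∈ ({0, 5} : Finset (Fin 8)) := pruneR (by decide) hs317 hs238 hc42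
      have hs319 : x16 ∈ ({3, 5, 7} : Finset (Fin 8)) := pruneL (by decide) hs250 hs316 hc79
      have hs320 : x22 ∈ ({5, 6, 7} : Finset (Fin 8)) := pruneL (by decide) hm22 hs319 hc99
      have hs321 : x3 ∈ ({0, 3, 5} : Finset (Fin 8)) := pruneL (by decide) hs249 hs318 hc18
      have hs322 : x5 ∈ ({0, 5} : Finset (Fin 8)) := pruneL (by decide) hs246 hs316 hc23
      have hs323 : x19 ∈ ({3, 5} : Finset (Fin 8)) := pruneR (by decide) hs314 hm19 hc108
      have hs324 : x16 ∈ ({5} : Finset (Fin 8)) := pruneR (by decide) hs315 hs319 hc63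
      have hs325 : x12 ∈ ({5} : Finset (Fin 8)) := pruneR (by decide) hs315 hs316 hc61
      have hs326 : x10 ∈ ({3, 5} : Finset (Fin 8)) := pruneR (by decide) hs314 hs245 hc105
      have hs327 : x15 ∈ ({0, 4, 5, 6} : Finset (Fin 8)) := pruneL (by decide) hs251 hs324 hc78
      have hs328 : x4 ∈ ({3} : Finset (Fin 8)) := pruneR (by decide) hs317 hs233 hc40
      have hs329 : x19 ∈ ({5} : Finset (Fin 8)) := pruneR (by decide) hs315 hs323 hc65
      have hs330 : x10 ∈ ({5} : Finset (Fin 8)) := pruneR (by decide) hs315 hs326 hc60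
      have hs331 : x14 ∈ ({4, 5, 6} : Finset (Fin 8)) := pruneR (by decide) hs330 hs244 hc48
      have hs332 : x14 ∈ ({5, 6} : Finset (Fin 8)) := pruneR (by decide) hs325 hs331 hc58
      have hs333 : x18 ∈ ({5} : Finset (Fin 8)) := pruneR (by decide) hs315 hm18 hc64
      have hs334 : x2 ∈ ({0, 3} : Finset (Fin 8)) := pruneR (by decide) hs317 hs235 hc38
      have hs335 : x21 ∈ ({5, 6, 7} : Finset (Fin 8)) := pruneR (by decide) hs320 hm21 hc98
      have hs336 : x14 ∈ ({5} : Finset (Fin 8)) := pruneR (by decide) hs314 hs332 hc107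
      have hs337 : x9 ∈ ({0, 4, 6} : Finset (Fin 8)) := pruneL (by decide) hs253 hs330 hc46
      have hs338 : x9 ∈ ({0, 6} : Finset (Fin 8)) := pruneL (by decide) hs337 hs325 hc45
      have hs339 : x17 ∈ ({3, 6, 7} : Finset (Fin 8)) := pruneL (by decide) hs252 hs318 hc81
      have hs340 : x17 ∈ ({6} : Finset (Fin 8)) := pruneL (by decide) hs339 hs329 hc83
      have hs341 : x15 ∈ ({0, 5, 6} : Finset (Fin 8)) := pruneL (by decide) hs327 hs335 hc75
      have hs342 : x21 ∈ ({5, 6} : Finset (Fin 8)) := pruneR (by decide) hs341 hs335 hc75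
      have hs343 : x20 ∈ ({3} : Finset (Fin 8)) := pruneL (by decide) hm20 hs328 hc93
      have hs344 : x9 ∈ ({0} : Finset (Fin 8)) := pruneR (by decide) hs343 hs338 hc94
      have hs345 : x11 ∈ ({0, 6} : Finset (Fin 8)) := pruneL (by decide) hs248 hs344 hc50
      exact Finset.notMem_empty _ (pruneL (by decide) hs343 hs340 hc96)

end FNP12

/-- for any `k`-dimensional hypergrid with `k ≥ 3` (a Cartesian
product of `k` paths, each with at least 2 vertices) and single-peaked
preferences, there is no false-name-proof and Pareto efficient deterministic SCF. -/
theorem stmt12 (k : ℕ) (hk : 3 ≤ k) (n : Fin k → ℕ) (hn : ∀ i, 2 ≤ n i) :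
    ¬ ∃ f : Multiset (∀ i : Fin k, Fin (n i)) → (∀ i : Fin k, Fin (n i)),
      FalseNameProof hypergridDist f ∧ ParetoEfficient hypergridDist f := by
  rintro ⟨f, fnp, pe⟩
  apply FNP12.cube_imposs
  classical
  set e := FNP12.emb hk n hn with he
  refine ⟨fun θ₀ => FNP12.clampF hk n hn (f (θ₀.map e)), ?_, ?_⟩
  · -- FalseNameProof
    intro θ₀ i hi fake hfake
    have hθ : θ₀ ≠ 0 := fun h => by simp [h] at hi
    have hΘ : θ₀.map e ≠ 0 := fun h => hθ (Multiset.map_eq_zero.mp h)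
    have hθ' : θ₀.erase i + fake ≠ 0 := by
      intro h
      have := congrArg Multiset.card h
      rw [Multiset.card_add] at this
      simp only [Multiset.card_zero] at this
      exact hfake (Multiset.card_eq_zero.mp (by omega))
    have hΘ' : (θ₀.erase i + fake).map e ≠ 0 := fun h => hθ' (Multiset.map_eq_zero.mp h)
    have hrange := FNP12.pe_in_cube hk n hn θ₀ hθ (f (θ₀.map e)) (pe _ hΘ)
    have hrange' := FNP12.pe_in_cube hk n hn (θ₀.erase i + fake) hθ'
      (f ((θ₀.erase i + fake).map e)) (pe _ hΘ')
    rw [← he] at hrange hrange'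
    have hmap : (θ₀.erase i + fake).map e = (θ₀.map e).erase (e i) + fake.map e := by
      rw [Multiset.map_add, Multiset.map_erase _ (FNP12.emb_inj hk n hn) i θ₀]
    have h := fnp (θ₀.map e) (e i) (Multiset.mem_map_of_mem e hi) (fake.map e)
      (fun h => hfake (Multiset.map_eq_zero.mp h))
    rw [← hmap] at h
    calc FNP12.d8 i (FNP12.clampF hk n hn (f (θ₀.map e)))
        = hypergridDist (e i) (e (FNP12.clampF hk n hn (f (θ₀.map e)))) :=
          (FNP12.emb_isometry hk n hn _ _).symm
      _ = hypergridDist (e i) (f (θ₀.map e)) := by rw [hrange]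
      _ ≤ hypergridDist (e i) (f ((θ₀.erase i + fake).map e)) := h
      _ = hypergridDist (e i) (e (FNP12.clampF hk n hn (f ((θ₀.erase i + fake).map e)))) := by
          rw [hrange']
      _ = FNP12.d8 i (FNP12.clampF hk n hn (f ((θ₀.erase i + fake).map e))) :=
          FNP12.emb_isometry hk n hn _ _
  · -- ParetoEfficient
    intro θ₀ hθ v hv
    obtain ⟨hall, i, hi, hlt⟩ := hv
    have hΘ : θ₀.map e ≠ 0 := fun h => hθ (Multiset.map_eq_zero.mp h)
    have hrange := FNP12.pe_in_cube hk n hn θ₀ hθ (f (θ₀.map e)) (pe _ hΘ)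
    rw [← he] at hrange
    apply pe (θ₀.map e) hΘ (e v)
    constructor
    · intro x hx
      obtain ⟨ii, hii, rfl⟩ := Multiset.mem_map.mp hx
      have := hall ii hii
      calc hypergridDist (e ii) (e v) = FNP12.d8 ii v := FNP12.emb_isometry hk n hn _ _
        _ ≤ FNP12.d8 ii (FNP12.clampF hk n hn (f (θ₀.map e))) := this
        _ = hypergridDist (e ii) (e (FNP12.clampF hk n hn (f (θ₀.map e)))) :=
            (FNP12.emb_isometry hk n hn _ _).symm
        _ = hypergridDist (e ii) (f (θ₀.map e)) := by rw [hrange]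
    · refine ⟨e i, Multiset.mem_map_of_mem e hi, ?_⟩
      calc hypergridDist (e i) (e v) = FNP12.d8 i v := FNP12.emb_isometry hk n hn _ _
        _ < FNP12.d8 i (FNP12.clampF hk n hn (f (θ₀.map e))) := hlt
        _ = hypergridDist (e i) (e (FNP12.clampF hk n hn (f (θ₀.map e)))) :=
            (FNP12.emb_isometry hk n hn _ _).symm
        _ = hypergridDist (e i) (f (θ₀.map e)) := by rw [hrange]
end

section
/- For the cycle graph C_k with 3 ≤ k ≤ 5 and single-dipped preferences, there exists a false-name-proof and Pareto efficient deterministic social choice function. In particular, for C_4 the sequential Pareto rule with order v1, v3, v2, v4 works, and for C_5 the sequential Pareto rule with order v1, v2, v5, v3, v4 works. -/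
namespace FNPFL

section Aux
variable {V : Type*} [DecidableEq V] [Fintype V]

def DomF (d : V → V → ℕ) (s : Finset V) (v w : V) : Prop :=
  (∀ i ∈ s, d i w ≤ d i v) ∧ ∃ i ∈ s, d i w < d i v

instance (d : V → V → ℕ) (s : Finset V) (v w : V) : Decidable (DomF d s v w) := by
  unfold DomF; infer_instance

def IsPEDF (d : V → V → ℕ) (s : Finset V) (w : V) : Prop := ∀ v, ¬ DomF d s v w

instance (d : V → V → ℕ) (s : Finset V) (w : V) : Decidable (IsPEDF d s w) := by
  unfold IsPEDF; infer_instance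

/-- `gRule d σ w₀ s` : the first vertex in `σ` that is Pareto efficient
(single-dipped) for a profile with support `s`, defaulting to `w₀`. -/
def gRule (d : V → V → ℕ) (σ : List V) (w₀ : V) (s : Finset V) : V :=
  ((σ.find? fun w => decide (IsPEDF d s w)).getD w₀)

omit [Fintype V] in
theorem isPED_iff (d : V → V → ℕ) (θ : Multiset V) (w : V) :
    IsPED d θ w ↔ IsPEDF d θ.toFinset w := by
  unfold IsPED IsPEDF DomD DomF
  simp [Multiset.mem_toFinset]

/-- A sequential Pareto rule agrees with `gRule` on nonempty profiles. -/
theorem seq_eq_gRule {d : V → V → ℕ} {σ : List V} {f : Multiset V → V} (w₀ : V)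
    (hf : SeqParetoRuleD d σ f) {θ : Multiset V} (hθ : θ ≠ 0) :
    f θ = gRule d σ w₀ θ.toFinset := by
  obtain ⟨l₁, l₂, hσ, hpe, hl₁⟩ := hf θ hθ
  unfold gRule
  rw [hσ, List.find?_append]
  have h1 : (l₁.find? fun w => decide (IsPEDF d θ.toFinset w)) = none := by
    rw [List.find?_eq_none]
    intro x hx
    simp only [decide_eq_true_eq]
    rw [← isPED_iff]
    exact hl₁ x hx
  have h2 : ((f θ :: l₂).find? fun w => decide (IsPEDF d θ.toFinset w)) = some (f θ) := by
    apply List.find?_cons_of_pos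
    simp only [decide_eq_true_eq]
    rw [← isPED_iff]
    exact hpe
  rw [h1, h2]
  rfl

theorem gRule_FNP {d : V → V → ℕ} {σ : List V} {w₀ : V}
    (hFNP : ∀ S : Finset V, S.Nonempty → ∀ i ∈ S, ∀ T : Finset V,
      T.Nonempty → S.erase i ⊆ T → d i (gRule d σ w₀ T) ≤ d i (gRule d σ w₀ S)) :
    FalseNameProofD d (fun θ => gRule d σ w₀ θ.toFinset) := by
  intro θ i hi fake hfake
  apply hFNP
  · exact ⟨i, Multiset.mem_toFinset.2 hi⟩
  · exact Multiset.mem_toFinset.2 hi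
  · rcases Multiset.exists_mem_of_ne_zero hfake with ⟨x, hx⟩
    exact ⟨x, Multiset.mem_toFinset.2 (Multiset.mem_add.2 (Or.inr hx))⟩
  · intro j hj
    rw [Finset.mem_erase] at hj
    obtain ⟨hji, hjS⟩ := hj
    rw [Multiset.mem_toFinset] at hjS
    rw [Multiset.mem_toFinset, Multiset.mem_add]
    exact Or.inl ((Multiset.mem_erase_of_ne hji).2 hjS)

theorem gRule_PE {d : V → V → ℕ} {σ : List V} {w₀ : V}
    (hPE : ∀ s : Finset V, s.Nonempty → IsPEDF d s (gRule d σ w₀ s)) :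
    ParetoEfficientD d (fun θ => gRule d σ w₀ θ.toFinset) := by
  intro θ hθ
  rw [isPED_iff]
  apply hPE
  rw [Finset.nonempty_iff_ne_empty]
  simpa [Multiset.toFinset_eq_empty] using hθ

/-- Any sequential Pareto rule inherits the two properties from the
corresponding checks on supports. -/
theorem seq_main {d : V → V → ℕ} {σ : List V} {f : Multiset V → V} (w₀ : V)
    (hf : SeqParetoRuleD d σ f)
    (hFNP : ∀ S : Finset V, S.Nonempty → ∀ i ∈ S, ∀ T : Finset V,
      T.Nonempty → S.erase i ⊆ T →
      d i (gRule d σ (w₀) T) ≤ d i (gRule d σ (w₀) S)) :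
    FalseNameProofD d f ∧ ParetoEfficientD d f := by
  constructor
  · intro θ i hi fake hfake
    have hθ : θ ≠ 0 := fun h => by simp [h] at hi
    have hθ' : θ.erase i + fake ≠ 0 := by
      intro h
      rcases Multiset.exists_mem_of_ne_zero hfake with ⟨x, hx⟩
      have : x ∈ θ.erase i + fake := Multiset.mem_add.2 (Or.inr hx)
      simp [h] at this
    rw [seq_eq_gRule (w₀) hf hθ, seq_eq_gRule (w₀) hf hθ']
    exact gRule_FNP hFNP θ i hi fake hfake
  · intro θ hθ
    obtain ⟨l₁, l₂, hσ, hpe, hl₁⟩ := hf θ hθ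
    exact hpe

end Aux

end FNPFL

open FNPFL

/-- for cycles `C_k` with `3 ≤ k ≤ 5` and single-dipped
preferences, a false-name-proof and Pareto efficient SCF exists; in particular,
on `C_4` the sequential Pareto rule with order `v1, v3, v2, v4` works, and on
`C_5` the one with order `v1, v2, v5, v3, v4` works. -/
theorem stmt16 :
    (∀ k : ℕ, 3 ≤ k → k ≤ 5 →
      ∃ f : Multiset (ZMod k) → ZMod k,
        FalseNameProofD (cycleDist k) f ∧ ParetoEfficientD (cycleDist k) f) ∧
    (∀ f : Multiset (ZMod 4) → ZMod 4,
      SeqParetoRuleD (cycleDist 4) [0, 2, 1, 3] f →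
        FalseNameProofD (cycleDist 4) f ∧ ParetoEfficientD (cycleDist 4) f) ∧
    (∀ f : Multiset (ZMod 5) → ZMod 5,
      SeqParetoRuleD (cycleDist 5) [0, 1, 4, 2, 3] f →
        FalseNameProofD (cycleDist 5) f ∧ ParetoEfficientD (cycleDist 5) f) := by
  classical
  have h3FNP : ∀ S : Finset (ZMod 3), S.Nonempty → ∀ i ∈ S, ∀ T : Finset (ZMod 3),
      T.Nonempty → S.erase i ⊆ T →
      cycleDist 3 i (gRule (cycleDist 3) [0,1,2] 0 T)
        ≤ cycleDist 3 i (gRule (cycleDist 3) [0,1,2] 0 S) := by decide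
  have h4FNP : ∀ S : Finset (ZMod 4), S.Nonempty → ∀ i ∈ S, ∀ T : Finset (ZMod 4),
      T.Nonempty → S.erase i ⊆ T →
      cycleDist 4 i (gRule (cycleDist 4) [0,2,1,3] 0 T)
        ≤ cycleDist 4 i (gRule (cycleDist 4) [0,2,1,3] 0 S) := by decide
  have h5FNP : ∀ S : Finset (ZMod 5), S.Nonempty → ∀ i ∈ S, ∀ T : Finset (ZMod 5),
      T.Nonempty → S.erase i ⊆ T →
      cycleDist 5 i (gRule (cycleDist 5) [0,1,4,2,3] 0 T)
        ≤ cycleDist 5 i (gRule (cycleDist 5) [0,1,4,2,3] 0 S) := by decide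
  have h3PE : ∀ s : Finset (ZMod 3), s.Nonempty →
      IsPEDF (cycleDist 3) s (gRule (cycleDist 3) [0,1,2] 0 s) := by decide
  have h4PE : ∀ s : Finset (ZMod 4), s.Nonempty →
      IsPEDF (cycleDist 4) s (gRule (cycleDist 4) [0,2,1,3] 0 s) := by decide
  have h5PE : ∀ s : Finset (ZMod 5), s.Nonempty →
      IsPEDF (cycleDist 5) s (gRule (cycleDist 5) [0,1,4,2,3] 0 s) := by decide
  refine ⟨?_, ?_, ?_⟩
  · intro k hk3 hk5
    interval_cases k
    · exact ⟨fun θ => gRule (cycleDist 3) [0,1,2] 0 θ.toFinset,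
        gRule_FNP h3FNP, gRule_PE h3PE⟩
    · exact ⟨fun θ => gRule (cycleDist 4) [0,2,1,3] 0 θ.toFinset,
        gRule_FNP h4FNP, gRule_PE h4PE⟩
    · exact ⟨fun θ => gRule (cycleDist 5) [0,1,4,2,3] 0 θ.toFinset,
        gRule_FNP h5FNP, gRule_PE h5PE⟩
  · intro f hf
    exact seq_main 0 hf (by simpa using h4FNP)
  · intro f hf
    exact seq_main 0 hf (by simpa using h5FNP)
end

section
/- Let Γ be a connected graph with single-peaked preferences. For every profile θ, the set PE(θ) of Pareto efficient vertices depends only on the set I(θ) of occupied vertices: if two profiles θ and θ' satisfy I(θ) = I(θ'), then PE(θ) = PE(θ'). -/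
open FNPFL

/-- with single-peaked preferences on a connected graph, the set of
Pareto efficient vertices of a profile depends only on the set of occupied
vertices. -/
theorem stmt19 {V : Type*} [DecidableEq V] (G : SimpleGraph V) (hG : G.Connected)
    (θ θ' : Multiset V) (hθ : θ ≠ 0) (hθ' : θ' ≠ 0)
    (h : θ.toFinset = θ'.toFinset) :
    ∀ w : V, IsPE G.dist θ w ↔ IsPE G.dist θ' w := by
  have hm : ∀ i : V, i ∈ θ ↔ i ∈ θ' := by
    intro i
    rw [← Multiset.mem_toFinset, ← Multiset.mem_toFinset, h]
  intro w
  constructor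
  · intro hpe v ⟨h1, i, hi, h2⟩
    exact hpe v ⟨fun j hj => h1 j ((hm j).mp hj), i, (hm i).mpr hi, h2⟩
  · intro hpe v ⟨h1, i, hi, h2⟩
    exact hpe v ⟨fun j hj => h1 j ((hm j).mpr hj), i, (hm i).mp hi, h2⟩
end
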